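/- arXiv:1602.02347 — 10 statements merged into one kernel-verified Lean document; each statement's English description precedes it below -/
import Mathlib

section
/- For m ∈ ℕ define P_m = Σ min(1 + j3, 1 + m − j1 − 2j2 − j3 − j4)·(j4 + 1)·x1^{j1} x2^{j2} x3^{j3} x4^{j4}, the sum being over all (j1, j2, j3, j4) ∈ ℕ⁴ with j1 + 2j2 + j3 + j4 ≤ m. Then in R[[t]] one has (Σ_{m=0}^∞ P_m t^m) · (1 − t)(1 − t·x1)(1 − t²·x2)(1 − t·x3)(1 − t²·x3)(1 − t·x4)² = 1. -/
/-!
Expanding each factor `1 / (1 - aᵢ t^wᵢ)` as a geometric series, the coefficient of `t^m` in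
`1 / ((1 - t) ∏ᵢ (1 - aᵢ t^wᵢ))` is the sum of `∏ aᵢ^vᵢ` over the exponent vectors `v` with
`∑ wᵢ vᵢ ≤ m`, the factor `1 / (1 - t)` turning `= m` into `≤ m`. This holds for any finite set
of factors: multiplying them back one at a time amounts to a linear recurrence on the
coefficients. For the six factors at hand, `(w, a) = (1, x1), (2, x2), (1, x3), (2, x3), (1, x4),
(1, x4)`, the monomial of `v` only depends on `j = (v₀, v₁, v₂ + v₃, v₄ + v₅)`, and the vectors
over `j` are parametrised by `v₃ ≤ min (j₃, m - j₁ - 2j₂ - j₃ - j₄)` and `v₅ ≤ j₄`: this is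
where the coefficient `min (1 + j₃, 1 + m - …) · (j₄ + 1)` of `P_m` comes from.
-/

open Finset

theorem card_filter_range_add_le (b c m : ℕ) :
    #{e ∈ range (c + 1) | b + e ≤ m} = min (1 + c) (1 + m - b) := by
  rw [show {e ∈ range (c + 1) | b + e ≤ m} = range (min (1 + c) (1 + m - b)) by
    ext e; simp only [mem_filter, mem_range, lt_min_iff]; omega, card_range]

theorem Pi.sub_single_add_single {ι : Type*} [DecidableEq ι] {v : ι → ℕ} {i : ι} (hv : v i ≠ 0) :
    v - Pi.single i 1 + Pi.single i 1 = v := by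
  funext j
  by_cases h : j = i
  · subst h
    simp only [add_apply, sub_apply, single_eq_same]
    omega
  · simp [h]

section WeightedExps

open PowerSeries

variable {A : Type*} [CommRing A]

theorem PowerSeries.mk_mul_one_sub_C_mul_X_pow {F G : ℕ → A} (a : A) (k : ℕ)
    (hlt : ∀ n < k, F n = G n) (hstep : ∀ n, F (n + k) = G (n + k) + a * F n) :
    mk F * (1 - C a * X ^ k) = mk G := by
  ext n
  rw [mul_sub, mul_one, map_sub, mul_left_comm, coeff_C_mul, coeff_mul_X_pow', coeff_mk, coeff_mk]
  split_ifs with h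
  · obtain ⟨n, rfl⟩ := Nat.exists_eq_add_of_le' h
    simp [hstep]
  · simp [hlt n (not_le.1 h)]

variable {ι : Type*} [DecidableEq ι] [Fintype ι] (w : ι → ℕ) (a : ι → A)

def weightedExps (s : Finset ι) (m : ℕ) : Finset (ι → ℕ) :=
  {v ∈ Fintype.piFinset fun _ => range (m + 1) | ∑ i, w i * v i ≤ m ∧ ∀ i ∉ s, v i = 0}

def weightedCoeff (s : Finset ι) (m : ℕ) : A :=
  ∑ v ∈ weightedExps w s m, ∏ i, a i ^ v i

variable {w}

theorem mem_weightedExps (hw : ∀ i, 0 < w i) {s : Finset ι} {m : ℕ} {v : ι → ℕ} :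
    v ∈ weightedExps w s m ↔ ∑ i, w i * v i ≤ m ∧ ∀ i ∉ s, v i = 0 := by
  refine mem_filter.trans (and_iff_right_of_imp fun ⟨hv, _⟩ ↦ Fintype.mem_piFinset.2 fun i ↦ ?_)
  have : w i * v i ≤ ∑ j, w j * v j :=
    single_le_sum (fun j _ ↦ Nat.zero_le (w j * v j)) (mem_univ i)
  have := Nat.le_mul_of_pos_left (v i) (hw i)
  exact mem_range.2 (by omega)

theorem sum_mul_add_single (v : ι → ℕ) (i : ι) :
    ∑ j, w j * (v + Pi.single i 1 : ι → ℕ) j = ∑ j, w j * v j + w i := by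
  simp [mul_add, sum_add_distrib, Pi.single_apply]

theorem prod_pow_add_single (v : ι → ℕ) (i : ι) :
    ∏ j, a j ^ (v + Pi.single i 1 : ι → ℕ) j = a i * ∏ j, a j ^ v j := by
  simp only [Pi.add_apply, pow_add, prod_mul_distrib, Pi.single_apply, pow_ite, pow_one, pow_zero,
    prod_ite_eq', mem_univ, if_true, mul_comm]

theorem weightedCoeff_empty (hw : ∀ i, 0 < w i) (m : ℕ) : weightedCoeff w a ∅ m = 1 := by
  have : weightedExps w ∅ m = {0} := by
    ext v
    simp +contextual [mem_weightedExps hw, funext_iff]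
  simp [weightedCoeff, this]

theorem weightedCoeff_insert_of_lt (hw : ∀ i, 0 < w i) (s : Finset ι) {i : ι} {m : ℕ}
    (hm : m < w i) : weightedCoeff w a (insert i s) m = weightedCoeff w a s m := by
  unfold weightedCoeff
  congr 1
  ext v
  simp only [mem_weightedExps hw, and_congr_right_iff]
  refine fun hv ↦ ⟨fun h j hj ↦ ?_, fun h j hj ↦ h j (mt mem_insert_of_mem hj)⟩
  by_cases hji : j = i
  · subst hji
    by_contra hj0
    have : w j * v j ≤ ∑ k, w k * v k :=
      single_le_sum (fun k _ ↦ Nat.zero_le (w k * v k)) (mem_univ j)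
    have := Nat.le_mul_of_pos_right (w j) (Nat.pos_of_ne_zero hj0)
    omega
  · exact h j (by simp [hji, hj])

theorem weightedCoeff_insert_add (hw : ∀ i, 0 < w i) {s : Finset ι} {i : ι} (hi : i ∉ s)
    (n : ℕ) : weightedCoeff w a (insert i s) (n + w i) =
      weightedCoeff w a s (n + w i) + a i * weightedCoeff w a (insert i s) n := by
  rw [weightedCoeff, ← sum_filter_add_sum_filter_not _ (fun v ↦ v i = 0)]
  congr 1
  · congr 1
    ext v
    simp only [mem_filter, mem_weightedExps hw, mem_insert, not_or]
    refine ⟨fun ⟨⟨hv, h⟩, hvi⟩ ↦ ⟨hv, fun j hj ↦ ?_⟩,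
      fun ⟨hv, h⟩ ↦ ⟨⟨hv, fun j hj ↦ h j hj.2⟩, h i hi⟩⟩
    by_cases hji : j = i
    · exact hji ▸ hvi
    · exact h j ⟨hji, hj⟩
  · rw [weightedCoeff, mul_sum]
    refine sum_nbij' (· - Pi.single i 1) (· + Pi.single i 1) ?_ ?_ ?_ ?_ ?_
    · intro v hv
      obtain ⟨hv, hvi⟩ := mem_filter.1 hv
      rw [mem_weightedExps hw] at hv ⊢
      have := sum_mul_add_single (w := w) (v - Pi.single i 1) i
      rw [Pi.sub_single_add_single hvi] at this
      exact ⟨by omega, fun j hj ↦ by simp [hv.2 j hj]⟩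
    · intro v hv
      rw [mem_weightedExps hw] at hv
      refine mem_filter.2 ⟨(mem_weightedExps hw).2 ⟨?_, fun j hj ↦ ?_⟩, by simp⟩
      · rw [sum_mul_add_single]
        omega
      · have hji : j ≠ i := fun h ↦ hj (h ▸ mem_insert_self i s)
        simp [hv.2 j hj, hji]
    · intro v hv
      exact Pi.sub_single_add_single (mem_filter.1 hv).2
    · intro v _
      exact add_tsub_cancel_right v _
    · intro v hv
      rw [← prod_pow_add_single, Pi.sub_single_add_single (mem_filter.1 hv).2]

theorem mk_weightedCoeff_mul (hw : ∀ i, 0 < w i) (s : Finset ι) :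
    mk (weightedCoeff w a s) * ((1 - X) * ∏ i ∈ s, (1 - C (a i) * X ^ w i)) = 1 := by
  induction s using Finset.induction_on with
  | empty =>
    rw [prod_empty, mul_one, funext (weightedCoeff_empty a hw)]
    exact mk_one_mul_one_sub_eq_one A
  | insert i s hi ih =>
    rw [prod_insert hi, mul_left_comm (1 - X), ← mul_assoc,
      mk_mul_one_sub_C_mul_X_pow (a i) (w i) (fun _ ↦ weightedCoeff_insert_of_lt a hw s)
        (weightedCoeff_insert_add a hw hi), ih]

end WeightedExps

section

open MvPolynomial

noncomputable def polyP (m : ℕ) : MvPolynomial (Fin 4) ℚ :=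
  ∑ j ∈ (Finset.range (m + 1) ×ˢ Finset.range (m + 1) ×ˢ Finset.range (m + 1) ×ˢ
        Finset.range (m + 1)).filter
      (fun j => j.1 + 2 * j.2.1 + j.2.2.1 + j.2.2.2 ≤ m),
    ((min (1 + j.2.2.1) (1 + m - j.1 - 2 * j.2.1 - j.2.2.1 - j.2.2.2) * (j.2.2.2 + 1) : ℕ) :
        MvPolynomial (Fin 4) ℚ) *
      X 0 ^ j.1 * X 1 ^ j.2.1 * X 2 ^ j.2.2.1 * X 3 ^ j.2.2.2

theorem mem_weightedExps_univ_six {m : ℕ} {v : Fin 6 → ℕ} :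
    v ∈ weightedExps ![1, 2, 1, 2, 1, 1] univ m ↔
      v 0 + 2 * v 1 + v 2 + 2 * v 3 + v 4 + v 5 ≤ m := by
  rw [mem_weightedExps (by decide)]
  simp [Fin.sum_univ_six]

theorem card_weightedExps_fiber (m j1 j2 j3 j4 : ℕ) :
    #{v ∈ weightedExps ![1, 2, 1, 2, 1, 1] univ m |
        (v 0, v 1, v 2 + v 3, v 4 + v 5) = (j1, j2, j3, j4)} =
      min (1 + j3) (1 + m - j1 - 2 * j2 - j3 - j4) * (j4 + 1) := by
  rw [show 1 + m - j1 - 2 * j2 - j3 - j4 = 1 + m - (j1 + 2 * j2 + j3 + j4) by omega,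
    ← card_filter_range_add_le, ← card_range (j4 + 1), ← card_product]
  refine card_nbij' (fun v ↦ (v 3, v 5)) (fun p ↦ ![j1, j2, j3 - p.1, p.1, j4 - p.2, p.2])
    ?_ ?_ ?_ ?_
  · intro v hv
    simp [mem_weightedExps_univ_six] at hv ⊢
    omega
  · rintro ⟨e, g⟩ h
    simp [mem_weightedExps_univ_six] at h ⊢
    omega
  · intro v hv
    simp only [coe_filter, Set.mem_ofPred_eq, mem_weightedExps_univ_six, Prod.mk.injEq] at hv
    ext i
    fin_cases i <;> simp <;> omega
  · intro p _
    simp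

theorem polyP_eq_weightedCoeff (m : ℕ) :
    polyP m = weightedCoeff ![1, 2, 1, 2, 1, 1] ![X 0, X 1, X 2, X 2, X 3, X 3] univ m := by
  let proj : (Fin 6 → ℕ) → ℕ × ℕ × ℕ × ℕ := fun v ↦ (v 0, v 1, v 2 + v 3, v 4 + v 5)
  let mono : ℕ × ℕ × ℕ × ℕ → MvPolynomial (Fin 4) ℚ := fun j ↦
    X 0 ^ j.1 * X 1 ^ j.2.1 * X 2 ^ j.2.2.1 * X 3 ^ j.2.2.2
  have hproj : ∀ v ∈ weightedExps ![1, 2, 1, 2, 1, 1] univ m,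
      proj v ∈ (range (m + 1) ×ˢ range (m + 1) ×ˢ range (m + 1) ×ˢ range (m + 1)).filter
        (fun j => j.1 + 2 * j.2.1 + j.2.2.1 + j.2.2.2 ≤ m) := by
    intro v hv
    rw [mem_weightedExps_univ_six] at hv
    simp only [mem_filter, mem_product, mem_range, proj]
    omega
  calc polyP m
      = ∑ j ∈ _, ∑ v ∈ weightedExps ![1, 2, 1, 2, 1, 1] univ m with proj v = j, mono j := by
        refine sum_congr rfl fun ⟨j1, j2, j3, j4⟩ _ ↦ ?_
        rw [sum_const, card_weightedExps_fiber, nsmul_eq_mul]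
        simp only [mono, mul_assoc]
    _ = ∑ v ∈ weightedExps ![1, 2, 1, 2, 1, 1] univ m, mono (proj v) :=
        sum_fiberwise_of_maps_to' hproj mono
    _ = _ := by
        refine sum_congr rfl fun v _ ↦ ?_
        simp only [mono, proj, Fin.prod_univ_six, Matrix.cons_val, pow_add]
        ring

theorem mk_polyP_mul :
    PowerSeries.mk polyP * ((1 - PowerSeries.X) *
      ∏ i, (1 - PowerSeries.C (![X 0, X 1, X 2, X 2, X 3, X 3] i) *
        PowerSeries.X ^ (![1, 2, 1, 2, 1, 1] : Fin 6 → ℕ) i)) = 1 := by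
  rw [funext polyP_eq_weightedCoeff]
  exact mk_weightedCoeff_mul _ (by decide) univ

end

/-- Over `R = ℚ[x1,x2,x3,x4]`, with
`P_m = ∑_{j1+2j2+j3+j4 ≤ m} min(1+j3, 1+m-j1-2j2-j3-j4)·(j4+1)·x1^j1 x2^j2 x3^j3 x4^j4`,
we have `(∑_m P_m t^m)·(1-t)(1-t·x1)(1-t²·x2)(1-t·x3)(1-t²·x3)(1-t·x4)² = 1` in `R[[t]]`. -/
theorem stmt_2 :
    (PowerSeries.mk (fun m : ℕ =>
      ∑ j ∈ (Finset.range (m + 1) ×ˢ Finset.range (m + 1) ×ˢ Finset.range (m + 1) ×ˢ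
            Finset.range (m + 1)).filter
          (fun j => j.1 + 2 * j.2.1 + j.2.2.1 + j.2.2.2 ≤ m),
        ((min (1 + j.2.2.1) (1 + m - j.1 - 2 * j.2.1 - j.2.2.1 - j.2.2.2) * (j.2.2.2 + 1) : ℕ) :
            MvPolynomial (Fin 4) ℚ) *
          MvPolynomial.X 0 ^ j.1 * MvPolynomial.X 1 ^ j.2.1 *
          MvPolynomial.X 2 ^ j.2.2.1 * MvPolynomial.X 3 ^ j.2.2.2)) *
      ((1 - PowerSeries.X) *
        (1 - PowerSeries.C (R := MvPolynomial (Fin 4) ℚ) (MvPolynomial.X 0) * PowerSeries.X) *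
        (1 - PowerSeries.C (R := MvPolynomial (Fin 4) ℚ) (MvPolynomial.X 1) * PowerSeries.X ^ 2) *
        (1 - PowerSeries.C (R := MvPolynomial (Fin 4) ℚ) (MvPolynomial.X 2) * PowerSeries.X) *
        (1 - PowerSeries.C (R := MvPolynomial (Fin 4) ℚ) (MvPolynomial.X 2) * PowerSeries.X ^ 2) *
        (1 - PowerSeries.C (R := MvPolynomial (Fin 4) ℚ) (MvPolynomial.X 3) * PowerSeries.X) ^ 2) =
      1 := by
  have key := mk_polyP_mul
  simp only [Fin.prod_univ_six, Matrix.cons_val, pow_one] at key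
  change PowerSeries.mk polyP * _ = 1
  linear_combination key
end

section
/- For m ∈ ℕ define a_m = Σ (1 + j3)(1 + j4)·x1^{j1} x2^{j2} x3^{j3} x4^{j4}, the sum being over all (j0, j1, j2, j3, j4) ∈ ℕ⁵ with j0 + j1 + 2j2 + j3 + j4 = m and j0 ≥ j3. Then in R[[t]] one has (Σ_{m=0}^∞ a_m t^m) · (1 − t)(1 − t·x1)(1 − t²·x2)(1 − t²·x3)²(1 − t·x4)² = 1. -/
/-!
Each factor `(1 - c t^k)^e` (with `e ≤ 2`) is inverted by substituting `c t^k` for `t` in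
`1/(1 - t)^e = ∑ (n + 1)^(e - 1) t^n`, i.e. by `expand k ∘ rescale c`. The `m`-th coefficient
of the product of these five inverses is a sum over `(i, j1, j2, j3, j4)` with
`i + j1 + 2 j2 + 2 j3 + j4 = m`, which becomes the sum defining `a_m` after the substitution
`j0 = i + j3`.
-/

open Finset PowerSeries

namespace PowerSeries

section Semiring

variable {R : Type*} [Semiring R]

theorem coeff_mul_eq_sum_filter_product {ι κ : Type*} {f g : R⟦X⟧} {N : ℕ}
    {S : Finset ι} {T : Finset κ} {v : ι → ℕ} {w : κ → ℕ} {c : ι → R} {d : κ → R}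
    (hf : ∀ n < N, coeff n f = ∑ i ∈ S with v i = n, c i)
    (hg : ∀ n < N, coeff n g = ∑ j ∈ T with w j = n, d j) :
    ∀ n < N, coeff n (f * g) = ∑ p ∈ S ×ˢ T with v p.1 + w p.2 = n, c p.1 * d p.2 := by
  intro n hn
  rw [coeff_mul, ← sum_fiberwise_of_maps_to (s := (S ×ˢ T).filter fun p => v p.1 + w p.2 = n)
    (g := fun p => (v p.1, w p.2)) (t := antidiagonal n) (by simp +contextual)]
  refine sum_congr rfl fun ab hab => ?_
  rw [HasAntidiagonal.mem_antidiagonal] at hab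
  rw [hf ab.1 (by omega), hg ab.2 (by omega), sum_mul_sum, ← sum_product', ← filter_product,
    filter_filter]
  refine sum_congr (filter_congr fun p _ => ?_) fun _ _ => rfl
  rw [Prod.ext_iff]
  omega

theorem coeff_eq_sum_filter_range (f : R⟦X⟧) (N : ℕ) :
    ∀ n < N, coeff n f = ∑ j ∈ range N with j = n, coeff j f := by
  intro n hn
  rw [filter_eq', if_pos (mem_range.mpr hn), sum_singleton]

end Semiring

variable {R : Type*} [CommRing R]

theorem coeff_expand_eq_sum_filter_range {k : ℕ} (hk : k ≠ 0) (f : R⟦X⟧) (N : ℕ) :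
    ∀ n < N, coeff n (expand k hk f) = ∑ j ∈ range N with k * j = n, coeff j f := by
  intro n hn
  rw [coeff_expand]
  split_ifs with hdvd
  · obtain ⟨q, rfl⟩ := hdvd
    have hq : q < N := by nlinarith [Nat.pos_of_ne_zero hk]
    rw [Nat.mul_div_cancel_left q (Nat.pos_of_ne_zero hk), coeff_eq_sum_filter_range f N q hq]
    exact sum_congr (filter_congr fun j _ => by simp [hk]) fun _ _ => rfl
  · refine (sum_eq_zero fun j hj => ?_).symm
    exact absurd ⟨j, (mem_filter.mp hj).2.symm⟩ hdvd

theorem rescale_mul_one_sub_C_mul_X_pow {f : R⟦X⟧} {e : ℕ} (h : f * (1 - X) ^ e = 1) (a : R) :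
    rescale a f * (1 - C a * X) ^ e = 1 := by
  simpa [rescale_X] using congrArg (rescale a) h

theorem expand_mul_one_sub_C_mul_X_pow {f : R⟦X⟧} {a : R} {e : ℕ}
    (h : f * (1 - C a * X) ^ e = 1) {k : ℕ} (hk : k ≠ 0) :
    expand k hk f * (1 - C a * X ^ k) ^ e = 1 := by
  simpa [expand_X, expand_C] using congrArg (expand k hk) h

end PowerSeries

local notation "R₄" => MvPolynomial (Fin 4) ℚ

noncomputable def aSeq (m : ℕ) : R₄ :=
  ∑ j ∈ (range (m + 1) ×ˢ range (m + 1) ×ˢ range (m + 1) ×ˢ range (m + 1) ×ˢ range (m + 1)).filter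
      (fun j => j.1 + j.2.1 + 2 * j.2.2.1 + j.2.2.2.1 + j.2.2.2.2 = m ∧ j.2.2.2.1 ≤ j.1),
    (((1 + j.2.2.2.1) * (1 + j.2.2.2.2) : ℕ) : R₄) *
      MvPolynomial.X 0 ^ j.2.1 * MvPolynomial.X 1 ^ j.2.2.1 *
      MvPolynomial.X 2 ^ j.2.2.2.1 * MvPolynomial.X 3 ^ j.2.2.2.2

noncomputable def invFactorProduct : R₄⟦X⟧ :=
  PowerSeries.mk 1 * (rescale (MvPolynomial.X 0) (PowerSeries.mk 1) *
    (expand 2 two_ne_zero (rescale (MvPolynomial.X 1) (PowerSeries.mk 1)) *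
      (expand 2 two_ne_zero (rescale (MvPolynomial.X 2) (PowerSeries.mk fun n => ((n + 1 : ℕ) : R₄))) *
        rescale (MvPolynomial.X 3) (PowerSeries.mk fun n => ((n + 1 : ℕ) : R₄)))))

theorem invFactorProduct_eq_mk_aSeq : invFactorProduct = PowerSeries.mk aSeq := by
  ext m : 1
  rw [coeff_mk, invFactorProduct]
  refine (coeff_mul_eq_sum_filter_product (coeff_eq_sum_filter_range _ (m + 1))
    (coeff_mul_eq_sum_filter_product (coeff_eq_sum_filter_range _ (m + 1))
      (coeff_mul_eq_sum_filter_product (coeff_expand_eq_sum_filter_range two_ne_zero _ (m + 1))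
        (coeff_mul_eq_sum_filter_product (coeff_expand_eq_sum_filter_range two_ne_zero _ (m + 1))
          (coeff_eq_sum_filter_range _ (m + 1))))) m m.lt_succ_self).trans ?_
  rw [aSeq]
  refine sum_nbij' (fun p => (p.1 + p.2.2.2.1, p.2.1, p.2.2.1, p.2.2.2.1, p.2.2.2.2))
    (fun j => (j.1 - j.2.2.2.1, j.2.1, j.2.2.1, j.2.2.2.1, j.2.2.2.2)) ?_ ?_ ?_ ?_ ?_
  · rintro ⟨i, j1, j2, j3, j4⟩ h
    simp only [mem_filter, mem_product, mem_range] at h ⊢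
    omega
  · rintro ⟨j0, j1, j2, j3, j4⟩ h
    simp only [mem_filter, mem_product, mem_range] at h ⊢
    omega
  · rintro ⟨i, j1, j2, j3, j4⟩ -
    simp
  · rintro ⟨j0, j1, j2, j3, j4⟩ h
    simp only [mem_filter, mem_product, mem_range] at h
    simp only [Prod.mk.injEq, and_true]
    omega
  · rintro ⟨i, j1, j2, j3, j4⟩ -
    simp only [coeff_mk, coeff_rescale, Pi.one_apply]
    push_cast
    ring

/-- Over `R = ℚ[x1,x2,x3,x4]`, with
`a_m = ∑ (1+j3)(1+j4)·x1^j1 x2^j2 x3^j3 x4^j4`, summed over `(j0,…,j4) ∈ ℕ⁵` with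
`j0+j1+2j2+j3+j4 = m` and `j0 ≥ j3`, we have
`(∑_m a_m t^m)·(1-t)(1-t·x1)(1-t²·x2)(1-t²·x3)²(1-t·x4)² = 1` in `R[[t]]`. -/
theorem stmt_3 :
    (PowerSeries.mk (fun m : ℕ =>
      ∑ j ∈ (Finset.range (m + 1) ×ˢ Finset.range (m + 1) ×ˢ Finset.range (m + 1) ×ˢ
            Finset.range (m + 1) ×ˢ Finset.range (m + 1)).filter
          (fun j => j.1 + j.2.1 + 2 * j.2.2.1 + j.2.2.2.1 + j.2.2.2.2 = m ∧ j.2.2.2.1 ≤ j.1),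
        (((1 + j.2.2.2.1) * (1 + j.2.2.2.2) : ℕ) : MvPolynomial (Fin 4) ℚ) *
          MvPolynomial.X 0 ^ j.2.1 * MvPolynomial.X 1 ^ j.2.2.1 *
          MvPolynomial.X 2 ^ j.2.2.2.1 * MvPolynomial.X 3 ^ j.2.2.2.2)) *
      ((1 - PowerSeries.X) *
        (1 - PowerSeries.C (R := MvPolynomial (Fin 4) ℚ) (MvPolynomial.X 0) * PowerSeries.X) *
        (1 - PowerSeries.C (R := MvPolynomial (Fin 4) ℚ) (MvPolynomial.X 1) * PowerSeries.X ^ 2) *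
        (1 - PowerSeries.C (R := MvPolynomial (Fin 4) ℚ) (MvPolynomial.X 2) * PowerSeries.X ^ 2) ^ 2 *
        (1 - PowerSeries.C (R := MvPolynomial (Fin 4) ℚ) (MvPolynomial.X 3) * PowerSeries.X) ^ 2) =
      1 := by
  have hgeom : (PowerSeries.mk 1 : R₄⟦X⟧) * (1 - X) ^ 1 = 1 := by
    simpa using mk_one_mul_one_sub_eq_one (S := R₄)
  have hgeom2 : (PowerSeries.mk fun n => ((n + 1 : ℕ) : R₄)) * (1 - X) ^ 2 = 1 := by
    simpa [add_comm] using mk_add_choose_mul_one_sub_pow_eq_one (S := R₄) 1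
  have h0 := rescale_mul_one_sub_C_mul_X_pow hgeom (MvPolynomial.X 0)
  have h1 := expand_mul_one_sub_C_mul_X_pow
    (rescale_mul_one_sub_C_mul_X_pow hgeom (MvPolynomial.X 1)) two_ne_zero
  have h2 := expand_mul_one_sub_C_mul_X_pow
    (rescale_mul_one_sub_C_mul_X_pow hgeom2 (MvPolynomial.X 2)) two_ne_zero
  have h3 := rescale_mul_one_sub_C_mul_X_pow hgeom2 (MvPolynomial.X 3)
  change PowerSeries.mk aSeq * _ = 1
  rw [← invFactorProduct_eq_mk_aSeq, invFactorProduct]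
  linear_combination congr_arg₂ HMul.hMul
    (congr_arg₂ HMul.hMul (congr_arg₂ HMul.hMul (congr_arg₂ HMul.hMul hgeom h0) h1) h2) h3
end

section
/- For m ∈ ℕ define b_m = Σ (1 + j0)(1 + j4)·x1^{j1} x2^{j2} x3^{j3} x4^{j4}, the sum being over all (j0, j1, j2, j3, j4) ∈ ℕ⁵ with j0 + j1 + 2j2 + j3 + j4 = m and j0 < j3. Then in R[[t]] one has (Σ_{m=0}^∞ b_m t^m) · (1 − t·x1)(1 − t²·x2)(1 − t·x3)(1 − t²·x3)²(1 − t·x4)² = x3·t. -/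
/-!
Substituting `j₃ = j₀ + 1 + k` removes the coupling `j₀ < j₃`: the generating function of `b`
becomes `x₃ t` times the product of `∑ (1 + j₀) (x₃ t²)^j₀`, `∑ (x₁ t)^j₁`, `∑ (x₂ t²)^j₂`,
`∑ (x₃ t)^k` and `∑ (1 + j₄) (x₄ t)^j₄`, which are the inverses of `(1 - x₃ t²)²`, `1 - x₁ t`,
`1 - x₂ t²`, `1 - x₃ t` and `(1 - x₄ t)²`.
-/

open Finset

namespace PowerSeries

variable {R : Type*} [CommRing R]

def mkExpand (d : ℕ) (c : ℕ → R) : R⟦X⟧ :=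
  mk fun n => if d ∣ n then c (n / d) else 0

theorem mkExpand_mul_one_sub {d : ℕ} (hd : 0 < d) {a : R} {c c' : ℕ → R} (h0 : c' 0 = c 0)
    (hsucc : ∀ i, c' (i + 1) = c (i + 1) - a * c i) :
    mkExpand d c * (1 - C a * X ^ d) = mkExpand d c' := by
  ext n
  rw [mul_sub, mul_one, map_sub, mul_left_comm, coeff_C_mul, coeff_mul_X_pow', mkExpand,
    mkExpand, coeff_mk, coeff_mk, coeff_mk]
  by_cases hn : d ≤ n
  · obtain ⟨k, rfl⟩ := Nat.exists_eq_add_of_le hn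
    simp only [if_pos hn, Nat.add_sub_cancel_left, Nat.dvd_add_self_left]
    split_ifs with hk
    · obtain ⟨i, rfl⟩ := hk
      rw [show d + d * i = d * (i + 1) by ring, Nat.mul_div_cancel_left _ hd,
        Nat.mul_div_cancel_left _ hd, hsucc]
    · simp
  · rw [if_neg hn, mul_zero, sub_zero]
    split_ifs with hk
    · rw [Nat.eq_zero_of_dvd_of_lt hk (not_le.mp hn), Nat.zero_div, h0]
    · rfl

theorem mkExpand_ite_zero_eq_one (d : ℕ) :
    mkExpand d (fun i => if i = 0 then (1 : R) else 0) = 1 := by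
  ext n
  rw [mkExpand, coeff_mk, coeff_one]
  by_cases hn : n = 0
  · simp [hn]
  · have : ¬ (d ∣ n ∧ n / d = 0) := fun ⟨h, h'⟩ =>
      hn (by rw [← Nat.div_mul_cancel h, h', zero_mul])
    simp only [if_neg hn, ite_eq_right_iff]
    tauto

theorem mkExpand_pow_mul_one_sub {d : ℕ} (hd : 0 < d) (a : R) :
    mkExpand d (a ^ ·) * (1 - C a * X ^ d) = 1 := by
  rw [mkExpand_mul_one_sub hd (c' := fun i => if i = 0 then 1 else 0) (by simp)
    (by simp [pow_succ']), mkExpand_ite_zero_eq_one d]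

theorem mkExpand_succ_mul_pow_mul_one_sub_sq {d : ℕ} (hd : 0 < d) (a : R) :
    mkExpand d (fun i => (i + 1 : R) * a ^ i) * (1 - C a * X ^ d) ^ 2 = 1 := by
  rw [sq, ← mul_assoc, mkExpand_mul_one_sub hd (c' := (a ^ ·)) (by simp)
    (fun i => by push_cast; ring), mkExpand_pow_mul_one_sub hd]

variable {ι κ : Type*}

/-- `f = ∑ⱼ w j • X ^ deg j`, where the finset `s n` contains every index of degree at most `n`. -/
def IsGeneratingFunction (f : R⟦X⟧) (s : ℕ → Finset ι) (deg : ι → ℕ) (w : ι → R) : Prop :=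
  (∀ j n, deg j ≤ n → j ∈ s n) ∧ ∀ n, coeff n f = ∑ j ∈ s n with deg j = n, w j

namespace IsGeneratingFunction

variable {f g : R⟦X⟧} {s : ℕ → Finset ι} {t : ℕ → Finset κ} {deg : ι → ℕ} {deg' : κ → ℕ}
  {w : ι → R} {w' : κ → R}

theorem coeff_eq_of_le (hf : IsGeneratingFunction f s deg w) {p n : ℕ} (hpn : p ≤ n) :
    coeff p f = ∑ j ∈ s n with deg j = p, w j := by
  rw [hf.2 p]
  congr 1
  ext j
  simp only [mem_filter, and_congr_left_iff]
  rintro rfl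
  exact ⟨fun _ => hf.1 j n hpn, fun _ => hf.1 j _ le_rfl⟩

theorem mul (hf : IsGeneratingFunction f s deg w) (hg : IsGeneratingFunction g t deg' w') :
    IsGeneratingFunction (f * g) (fun n => s n ×ˢ t n) (fun j => deg j.1 + deg' j.2)
      (fun j => w j.1 * w' j.2) := by
  refine ⟨fun j n (hj : deg j.1 + deg' j.2 ≤ n) =>
    mem_product.2 ⟨hf.1 _ _ (by omega), hg.1 _ _ (by omega)⟩, fun n => ?_⟩
  rw [coeff_mul, ← sum_fiberwise_of_maps_to (g := fun j : ι × κ => (deg j.1, deg' j.2))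
    (t := antidiagonal n) (fun j hj => by simpa using (mem_filter.1 hj).2)]
  refine sum_congr rfl fun pq hpq => ?_
  rw [HasAntidiagonal.mem_antidiagonal] at hpq
  rw [hf.coeff_eq_of_le (by omega : pq.1 ≤ n), hg.coeff_eq_of_le (by omega : pq.2 ≤ n),
    sum_mul_sum, ← sum_product']
  refine sum_congr ?_ fun _ _ => rfl
  ext j
  simp only [mem_filter, mem_product, Prod.ext_iff]
  constructor
  · rintro ⟨⟨hs, h1⟩, ht, h2⟩
    exact ⟨⟨⟨hs, ht⟩, by omega⟩, h1, h2⟩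
  · rintro ⟨⟨⟨hs, ht⟩, -⟩, h1, h2⟩
    exact ⟨⟨hs, h1⟩, ht, h2⟩

end IsGeneratingFunction

theorem isGeneratingFunction_mkExpand {d : ℕ} (hd : 0 < d) (c : ℕ → R) :
    IsGeneratingFunction (mkExpand d c) (fun n => range (n + 1)) (d * ·) c := by
  refine ⟨fun j n hj => mem_range.2 (by nlinarith), fun n => ?_⟩
  rw [mkExpand, coeff_mk]
  split_ifs with h
  · obtain ⟨i, rfl⟩ := h
    rw [Nat.mul_div_cancel_left _ hd, sum_eq_single_of_mem i]
    · simp [Nat.le_mul_of_pos_left i hd]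
    · rintro b hb hbi
      exact absurd (Nat.eq_of_mul_eq_mul_left hd (mem_filter.1 hb).2) hbi
  · exact (sum_eq_zero fun i hi => absurd ⟨i, (mem_filter.1 hi).2.symm⟩ h).symm

end PowerSeries

open PowerSeries

section

variable {R : Type*} [CommRing R] (x₁ x₂ x₃ x₄ : R)

def bCoeff (m : ℕ) : R :=
  ∑ j ∈ (range (m + 1) ×ˢ range (m + 1) ×ˢ range (m + 1) ×ˢ range (m + 1) ×ˢ range (m + 1)).filter
      (fun j => j.1 + j.2.1 + 2 * j.2.2.1 + j.2.2.2.1 + j.2.2.2.2 = m ∧ j.1 < j.2.2.2.1),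
    (((1 + j.1) * (1 + j.2.2.2.2) : ℕ) : R) *
      x₁ ^ j.2.1 * x₂ ^ j.2.2.1 * x₃ ^ j.2.2.2.1 * x₄ ^ j.2.2.2.2

theorem mk_bCoeff_eq :
    mk (bCoeff x₁ x₂ x₃ x₄) = C x₃ * X *
      (mkExpand 2 (fun i => (i + 1 : R) * x₃ ^ i) * (mkExpand 1 (x₁ ^ ·) * (mkExpand 2 (x₂ ^ ·) *
        (mkExpand 1 (x₃ ^ ·) * mkExpand 1 (fun i => (i + 1 : R) * x₄ ^ i))))) := by
  have hP := (isGeneratingFunction_mkExpand two_pos (fun i => (i + 1 : R) * x₃ ^ i)).mul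
    ((isGeneratingFunction_mkExpand one_pos (x₁ ^ ·)).mul
      ((isGeneratingFunction_mkExpand two_pos (x₂ ^ ·)).mul
        ((isGeneratingFunction_mkExpand one_pos (x₃ ^ ·)).mul
          (isGeneratingFunction_mkExpand one_pos (fun i => (i + 1 : R) * x₄ ^ i)))))
  ext (_ | m)
  · rw [mul_assoc, coeff_C_mul, coeff_zero_X_mul, mul_zero, coeff_mk, bCoeff]
    exact sum_eq_zero fun j hj => by simp only [mem_filter] at hj; omega
  · rw [mul_assoc, coeff_C_mul, coeff_succ_X_mul, hP.2 m, coeff_mk, bCoeff, mul_sum]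
    refine sum_nbij' (fun j => (j.1, j.2.1, j.2.2.1, j.2.2.2.1 - j.1 - 1, j.2.2.2.2))
      (fun j => (j.1, j.2.1, j.2.2.1, j.2.2.2.1 + j.1 + 1, j.2.2.2.2)) ?_ ?_ ?_ ?_ ?_
    · rintro ⟨j₀, j₁, j₂, j₃, j₄⟩ hj
      simp only [mem_filter, mem_product, mem_range] at hj ⊢
      omega
    · rintro ⟨j₀, j₁, j₂, j₃, j₄⟩ hj
      simp only [mem_filter, mem_product, mem_range] at hj ⊢
      omega
    · rintro ⟨j₀, j₁, j₂, j₃, j₄⟩ hj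
      simp only [mem_filter] at hj
      simp only [Prod.mk.injEq, true_and, and_true]
      omega
    · rintro ⟨j₀, j₁, j₂, j₃, j₄⟩ -
      simp only [Prod.mk.injEq, true_and, and_true]
      omega
    · rintro ⟨j₀, j₁, j₂, j₃, j₄⟩ hj
      simp only [mem_filter] at hj
      obtain ⟨k, rfl⟩ : ∃ k, j₃ = k + j₀ + 1 := ⟨j₃ - j₀ - 1, by omega⟩
      dsimp only
      rw [show k + j₀ + 1 - j₀ - 1 = k by omega]
      push_cast
      ring

theorem mk_bCoeff_mul :
    mk (bCoeff x₁ x₂ x₃ x₄) * ((1 - C x₁ * X) * (1 - C x₂ * X ^ 2) * (1 - C x₃ * X) *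
      (1 - C x₃ * X ^ 2) ^ 2 * (1 - C x₄ * X) ^ 2) = C x₃ * X := by
  have h₁ := mkExpand_pow_mul_one_sub one_pos x₁
  have h₂ := mkExpand_pow_mul_one_sub two_pos x₂
  have h₃ := mkExpand_pow_mul_one_sub one_pos x₃
  have h₃' := mkExpand_succ_mul_pow_mul_one_sub_sq two_pos x₃
  have h₄ := mkExpand_succ_mul_pow_mul_one_sub_sq one_pos x₄
  rw [pow_one] at h₁ h₃ h₄
  calc _ = C x₃ * X * ((mkExpand 2 (fun i => (i + 1 : R) * x₃ ^ i) * (1 - C x₃ * X ^ 2) ^ 2) *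
        (mkExpand 1 (x₁ ^ ·) * (1 - C x₁ * X)) * (mkExpand 2 (x₂ ^ ·) * (1 - C x₂ * X ^ 2)) *
        (mkExpand 1 (x₃ ^ ·) * (1 - C x₃ * X)) *
        (mkExpand 1 (fun i => (i + 1 : R) * x₄ ^ i) * (1 - C x₄ * X) ^ 2)) := by
          rw [mk_bCoeff_eq]; ring
    _ = C x₃ * X := by rw [h₁, h₂, h₃, h₃', h₄]; ring

end

/-- Over `R = ℚ[x1,x2,x3,x4]`, with
`b_m = ∑ (1+j0)(1+j4)·x1^j1 x2^j2 x3^j3 x4^j4`, summed over `(j0,…,j4) ∈ ℕ⁵` with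
`j0+j1+2j2+j3+j4 = m` and `j0 < j3`, we have
`(∑_m b_m t^m)·(1-t·x1)(1-t²·x2)(1-t·x3)(1-t²·x3)²(1-t·x4)² = x3·t` in `R[[t]]`. -/
theorem stmt_4 :
    (PowerSeries.mk (fun m : ℕ =>
      ∑ j ∈ (Finset.range (m + 1) ×ˢ Finset.range (m + 1) ×ˢ Finset.range (m + 1) ×ˢ
            Finset.range (m + 1) ×ˢ Finset.range (m + 1)).filter
          (fun j => j.1 + j.2.1 + 2 * j.2.2.1 + j.2.2.2.1 + j.2.2.2.2 = m ∧ j.1 < j.2.2.2.1),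
        (((1 + j.1) * (1 + j.2.2.2.2) : ℕ) : MvPolynomial (Fin 4) ℚ) *
          MvPolynomial.X 0 ^ j.2.1 * MvPolynomial.X 1 ^ j.2.2.1 *
          MvPolynomial.X 2 ^ j.2.2.2.1 * MvPolynomial.X 3 ^ j.2.2.2.2)) *
      ((1 - PowerSeries.C (R := MvPolynomial (Fin 4) ℚ) (MvPolynomial.X 0) * PowerSeries.X) *
        (1 - PowerSeries.C (R := MvPolynomial (Fin 4) ℚ) (MvPolynomial.X 1) * PowerSeries.X ^ 2) *
        (1 - PowerSeries.C (R := MvPolynomial (Fin 4) ℚ) (MvPolynomial.X 2) * PowerSeries.X) *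
        (1 - PowerSeries.C (R := MvPolynomial (Fin 4) ℚ) (MvPolynomial.X 2) * PowerSeries.X ^ 2) ^ 2 *
        (1 - PowerSeries.C (R := MvPolynomial (Fin 4) ℚ) (MvPolynomial.X 3) * PowerSeries.X) ^ 2) =
      PowerSeries.C (R := MvPolynomial (Fin 4) ℚ) (MvPolynomial.X 2) * PowerSeries.X :=
  mk_bCoeff_mul _ _ _ _
end

section
/- For m ∈ ℕ define c_m = Σ ⌊(j2 − j0)/3⌋·x1^{j1} x2^{j2}, the sum being over all (j0, j1, j2) ∈ ℕ³ with j0 + 3j1 + j2 = m and j2 ≤ j0 (so each coefficient ⌊(j2 − j0)/3⌋ is a nonpositive integer). Then in R[[t]] one has (Σ_{m=0}^∞ c_m t^m) · (1 − t)(1 − t³)(1 − t³·x1)(1 − t²·x2) = −t. -/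
/-!
Put `x = x1`, `y = x2` and `j0 = j2 + i`. Then `∑ c_m t^m` factors as
`(∑ (x t³)^j1) · (∑ (y t²)^j2) · g` with `g = ∑ ⌊-i/3⌋ t^i`, so multiplying by
`(1 - x t³)(1 - y t²)` leaves `g`. On coefficients these two steps are the recurrences
`c_n = d_n + x c_{n-3}` and `d_n = ⌊-n/3⌋ + y d_{n-2}`, where `d_n` is the `j1 = 0` part
of `c_n`. Finally `⌊-(i+3)/3⌋ = ⌊-i/3⌋ - 1` gives `(1 - t³) g = -(t + t² + ⋯)`, which
`1 - t` turns into `-t`.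
-/

variable {R : Type*} [CommRing R]

open PowerSeries in
theorem PowerSeries.mk_mul_one_sub_C_mul_X_pow_of_eq {f g : ℕ → R} {a : R} {k : ℕ}
    (h : ∀ n, f n = g n + if k ≤ n then a * f (n - k) else 0) :
    mk f * (1 - C a * X ^ k) = mk g := by
  ext n
  rw [mul_sub, mul_one, mul_left_comm, map_sub, coeff_C_mul, coeff_mul_X_pow', coeff_mk,
    coeff_mk, h n]
  split_ifs <;> simp

theorem Int.fdiv_neg_natCast_of_pos_of_le {n k : ℕ} (hn : 0 < n) (hnk : n ≤ k) :
    Int.fdiv (-(n : ℤ)) k = -1 := by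
  rw [Int.fdiv_eq_ediv_of_nonneg _ (by positivity)]
  exact Int.ediv_eq_neg_one_of_neg_of_le (by omega) (by simpa using hnk)

theorem Int.fdiv_neg_natCast_sub {n k : ℕ} (hk : 0 < k) (hkn : k ≤ n) :
    Int.fdiv (-(n : ℤ)) k = Int.fdiv (-((n - k : ℕ) : ℤ)) k - 1 := by
  rw [Int.fdiv_eq_ediv_of_nonneg _ (by positivity), Int.fdiv_eq_ediv_of_nonneg _ (by positivity),
    show -(n : ℤ) = -((n - k : ℕ) : ℤ) + (-1) * k by push_cast [hkn]; ring,
    Int.add_mul_ediv_right _ _ (by positivity)]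
  ring

open PowerSeries in
theorem mk_fdiv_neg_mul_one_sub_X_mul_one_sub_X_pow {k : ℕ} (hk : 0 < k) :
    mk (fun n : ℕ => ((Int.fdiv (-(n : ℤ)) k : ℤ) : R)) * ((1 - X) * (1 - X ^ k)) = -X := by
  have hrec : mk (fun n : ℕ => ((Int.fdiv (-(n : ℤ)) k : ℤ) : R)) * (1 - X ^ k) =
      mk (fun n => if n = 0 then 0 else -1) := by
    simpa using mk_mul_one_sub_C_mul_X_pow_of_eq (a := (1 : R)) (k := k) fun n => by
      rcases Nat.eq_zero_or_pos n with rfl | hn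
      · simp
      by_cases hkn : k ≤ n
      · rw [if_neg hn.ne', if_pos hkn, Int.fdiv_neg_natCast_sub hk hkn]; push_cast; ring
      · rw [if_neg hn.ne', if_neg hkn, Int.fdiv_neg_natCast_of_pos_of_le hn (by omega)]; simp
  have hshift : (mk fun n => if n = 0 then 0 else -1 : R⟦X⟧) = -(X * mk 1) := by
    ext (_ | n) <;> simp [coeff_succ_X_mul]
  rw [mul_comm (1 - X), ← mul_assoc, hrec, hshift, neg_mul, mul_assoc,
    mk_one_mul_one_sub_eq_one, mul_one]

section Coefficients

open Finset

def dSeq (y : R) (n : ℕ) : R :=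
  ∑ p ∈ (range (n + 1) ×ˢ range (n + 1)).filter (fun p => p.1 + p.2 = n ∧ p.2 ≤ p.1),
    ((Int.fdiv ((p.2 : ℤ) - (p.1 : ℤ)) 3 : ℤ) : R) * y ^ p.2

def cSeq (x y : R) (m : ℕ) : R :=
  ∑ j ∈ (range (m + 1) ×ˢ range (m + 1) ×ˢ range (m + 1)).filter
      (fun j => j.1 + 3 * j.2.1 + j.2.2 = m ∧ j.2.2 ≤ j.1),
    ((Int.fdiv ((j.2.2 : ℤ) - (j.1 : ℤ)) 3 : ℤ) : R) * x ^ j.2.1 * y ^ j.2.2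

theorem dSeq_eq (y : R) (n : ℕ) :
    dSeq y n =
      ((Int.fdiv (-(n : ℤ)) 3 : ℤ) : R) + if 2 ≤ n then y * dSeq y (n - 2) else 0 := by
  rw [dSeq, ← sum_filter_add_sum_filter_not _ (fun p => p.2 = 0)]
  congr 1
  · rw [sum_eq_single_of_mem (n, 0) (by simp)]
    · simp
    · intro p hp hne
      simp only [mem_filter, mem_product, mem_range, ne_eq, Prod.ext_iff] at hp hne
      omega
  split_ifs with hn
  · rw [dSeq, mul_sum]
    refine sum_nbij' (fun p => (p.1 - 1, p.2 - 1)) (fun p => (p.1 + 1, p.2 + 1)) ?_ ?_ ?_ ?_ ?_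
    iterate 4 · intro p hp; simp [Prod.ext_iff] at hp ⊢ <;> omega
    rintro ⟨a, b⟩ hp
    obtain ⟨b, rfl⟩ := Nat.exists_eq_add_one_of_ne_zero (mem_filter.1 hp).2
    have ha : a ≠ 0 := by
      simp only [mem_filter, mem_product, mem_range] at hp
      omega
    obtain ⟨a, rfl⟩ := Nat.exists_eq_add_one_of_ne_zero ha
    simp only [Nat.add_sub_cancel, Nat.cast_add, Nat.cast_one, add_sub_add_right_eq_sub, pow_succ]
    ring
  · refine sum_eq_zero fun p hp => ?_
    simp only [mem_filter, mem_product, mem_range] at hp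
    omega

theorem cSeq_eq (x y : R) (n : ℕ) :
    cSeq x y n = dSeq y n + if 3 ≤ n then x * cSeq x y (n - 3) else 0 := by
  rw [cSeq, ← sum_filter_add_sum_filter_not _ (fun j => j.2.1 = 0)]
  congr 1
  · refine sum_nbij' (fun j => (j.1, j.2.2)) (fun p => (p.1, 0, p.2)) ?_ ?_ ?_ ?_ ?_
    iterate 4 · intro j hj; simp [Prod.ext_iff] at hj ⊢ <;> omega
    rintro ⟨a, b, c⟩ hj
    obtain rfl : b = 0 := (mem_filter.1 hj).2
    simp
  split_ifs with hn
  · rw [cSeq, mul_sum]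
    refine sum_nbij' (fun j => (j.1, j.2.1 - 1, j.2.2)) (fun j => (j.1, j.2.1 + 1, j.2.2))
      ?_ ?_ ?_ ?_ ?_
    iterate 4 · intro j hj; simp [Prod.ext_iff] at hj ⊢ <;> omega
    rintro ⟨a, b, c⟩ hj
    obtain ⟨b, rfl⟩ := Nat.exists_eq_add_one_of_ne_zero (mem_filter.1 hj).2
    simp only [Nat.add_sub_cancel, pow_succ]
    ring
  · refine sum_eq_zero fun j hj => ?_
    simp only [mem_filter, mem_product, mem_range] at hj
    omega

end Coefficients

/-- Over `R = ℚ[x1,x2]`, with `c_m = ∑ ⌊(j2-j0)/3⌋·x1^j1 x2^j2`, summed over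
`(j0,j1,j2) ∈ ℕ³` with `j0+3j1+j2 = m` and `j2 ≤ j0` (floor as `Int.fdiv`), we have
`(∑_m c_m t^m)·(1-t)(1-t³)(1-t³·x1)(1-t²·x2) = -t` in `R[[t]]`. -/
theorem stmt_7 :
    (PowerSeries.mk (fun m : ℕ =>
      ∑ j ∈ (Finset.range (m + 1) ×ˢ Finset.range (m + 1) ×ˢ Finset.range (m + 1)).filter
          (fun j => j.1 + 3 * j.2.1 + j.2.2 = m ∧ j.2.2 ≤ j.1),
        ((Int.fdiv ((j.2.2 : ℤ) - (j.1 : ℤ)) 3 : ℤ) : MvPolynomial (Fin 2) ℚ) *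
          MvPolynomial.X 0 ^ j.2.1 * MvPolynomial.X 1 ^ j.2.2)) *
      ((1 - PowerSeries.X) * (1 - PowerSeries.X ^ 3) *
        (1 - PowerSeries.C (R := MvPolynomial (Fin 2) ℚ) (MvPolynomial.X 0) * PowerSeries.X ^ 3) *
        (1 - PowerSeries.C (R := MvPolynomial (Fin 2) ℚ) (MvPolynomial.X 1) * PowerSeries.X ^ 2)) =
      -PowerSeries.X := by
  set x : MvPolynomial (Fin 2) ℚ := MvPolynomial.X 0
  set y : MvPolynomial (Fin 2) ℚ := MvPolynomial.X 1
  have hc := PowerSeries.mk_mul_one_sub_C_mul_X_pow_of_eq (cSeq_eq x y)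
  have hd := PowerSeries.mk_mul_one_sub_C_mul_X_pow_of_eq (dSeq_eq y)
  have hg := mk_fdiv_neg_mul_one_sub_X_mul_one_sub_X_pow (R := MvPolynomial (Fin 2) ℚ) three_pos
  rw [Nat.cast_ofNat] at hg
  change PowerSeries.mk (cSeq x y) * _ = _
  rw [← hg, ← hd, ← hc]
  ring
end

section
/- For m ∈ ℕ define a_m = Σ (min(⌊j0/3⌋, ⌊(j2 − j0)/3⌋ + ⌊j0/3⌋) + 1)·x1^{j1} x2^{j2}, the sum being over all (j0, j1, j2) ∈ ℕ³ with j0 + 3j1 + j2 = m, where min is taken in ℤ. Then in R[[t]] one has (Σ_{m=0}^∞ a_m t^m) · (1 − t³)(1 − t³·x1)(1 − t·x2)(1 − t²·x2) = 1. -/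
/-! The weight `w(j₀, j₂) = floorWeight j₀ j₂` counts the `i ≥ 0` with `0 ≤ j₀ - 3i ≤ j₂`, hence
`w(j₀, j₂) = [j₀ ≤ j₂] + w(j₀ - 3, j₂)`. Multiplying by the four factors in the order
`1 - x t³`, `1 - t³`, `1 - y t`, `1 - y t²`, each one telescopes a recurrence of the coefficients:
the series becomes `∑ w(j₀, j₂) t^(j₀+j₂) y^j₂`, then `∑_{j₀ ≤ j₂} t^(j₀+j₂) y^j₂`,
then `∑_{j₀ = j₂} t^(j₀+j₂) y^j₂`, and finally `1`. -/

open Finset PowerSeries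

variable {R : Type*} [CommRing R]

theorem PowerSeries.mk_mul_one_sub_C_mul_X_pow_eq_mk {f g : ℕ → R} {u : R} {k : ℕ}
    (h : ∀ n, f n = g n + u * if k ≤ n then f (n - k) else 0) :
    mk f * (1 - C u * X ^ k) = mk g := by
  ext n
  rw [mul_sub, mul_one, mul_left_comm, map_sub, coeff_C_mul, coeff_mul_X_pow', coeff_mk, coeff_mk,
    coeff_mk, h n, add_sub_cancel_right]

theorem Finset.sum_range_div_add_one_pow_mul {k : ℕ} (hk : 0 < k) (f : ℕ → R) (u : R) (n : ℕ) :
    ∑ i ∈ range (n / k + 1), u ^ i * f (n - k * i) = f n +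
      u * if k ≤ n then ∑ i ∈ range ((n - k) / k + 1), u ^ i * f (n - k - k * i) else 0 := by
  split_ifs with hn
  · rw [Nat.div_eq_sub_div hk hn, sum_range_succ', mul_sum]
    refine (add_comm _ _).trans (congrArg₂ _ (by simp) (sum_congr rfl fun i _ => ?_))
    rw [pow_succ', mul_assoc, Nat.sub_sub, mul_add_one, add_comm k]
  · simp [Nat.div_eq_of_lt (not_le.mp hn)]

theorem Finset.Nat.sum_antidiagonal_eq_add_of_eq {F G : ℕ → ℕ → R} {u : R} {k l : ℕ}
    (h : ∀ i j, F i j = G i j + u * if k ≤ i ∧ l ≤ j then F (i - k) (j - l) else 0) (n : ℕ) :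
    ∑ p ∈ antidiagonal n, F p.1 p.2 = ∑ p ∈ antidiagonal n, G p.1 p.2 +
      u * if k + l ≤ n then ∑ p ∈ antidiagonal (n - (k + l)), F p.1 p.2 else 0 := by
  rw [sum_congr rfl fun p _ => h p.1 p.2, sum_add_distrib, ← mul_sum]
  congr 2
  split_ifs with hn
  · rw [← sum_filter]
    refine sum_nbij' (fun p => (p.1 - k, p.2 - l)) (fun p => (p.1 + k, p.2 + l)) ?_ ?_ ?_ ?_
      fun _ _ => rfl <;>
    · intro p hp
      simp only [mem_filter, HasAntidiagonal.mem_antidiagonal, Prod.ext_iff] at hp ⊢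
      omega
  · exact sum_eq_zero fun p hp => if_neg (by rw [HasAntidiagonal.mem_antidiagonal] at hp; omega)

def floorWeight (j₀ j₂ : ℕ) : ℤ :=
  min (Int.fdiv (j₀ : ℤ) 3) (Int.fdiv ((j₂ : ℤ) - (j₀ : ℤ)) 3 + Int.fdiv (j₀ : ℤ) 3) + 1

theorem floorWeight_eq (j₀ j₂ : ℕ) :
    floorWeight j₀ j₂ =
      (if j₀ ≤ j₂ then 1 else 0) + if 3 ≤ j₀ then floorWeight (j₀ - 3) j₂ else 0 := by
  simp only [floorWeight, Int.fdiv_eq_ediv_of_nonneg _ (by norm_num : (0 : ℤ) ≤ 3), min_def]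
  split_ifs <;> omega

noncomputable def seriesCoeff (x y : R) (m : ℕ) : R :=
  ∑ j ∈ (range (m + 1) ×ˢ range (m + 1) ×ˢ range (m + 1)).filter
      (fun j => j.1 + 3 * j.2.1 + j.2.2 = m),
    ((floorWeight j.1 j.2.2 : ℤ) : R) * x ^ j.2.1 * y ^ j.2.2

variable (x y : R)

theorem seriesCoeff_eq_sum_range (n : ℕ) :
    seriesCoeff x y n = ∑ i ∈ range (n / 3 + 1),
      x ^ i * ∑ p ∈ antidiagonal (n - 3 * i), (floorWeight p.1 p.2 : R) * y ^ p.2 := by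
  simp_rw [mul_sum]
  rw [sum_sigma']
  refine sum_nbij' (fun j => ⟨j.2.1, (j.1, j.2.2)⟩) (fun p => (p.2.1, p.1, p.2.2)) ?_ ?_
    (fun _ _ => rfl) (fun _ _ => rfl) fun _ _ => by ring
  all_goals
    intro j hj
    simp only [mem_filter, mem_product, mem_range, mem_sigma,
      HasAntidiagonal.mem_antidiagonal] at hj ⊢
    omega

theorem mk_seriesCoeff_mul_one_sub :
    PowerSeries.mk (seriesCoeff x y) * (1 - C x * X ^ 3) =
      PowerSeries.mk fun n => ∑ p ∈ antidiagonal n, (floorWeight p.1 p.2 : R) * y ^ p.2 := by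
  refine mk_mul_one_sub_C_mul_X_pow_eq_mk fun n => ?_
  simp only [seriesCoeff_eq_sum_range]
  exact sum_range_div_add_one_pow_mul three_pos
    (fun m => ∑ p ∈ antidiagonal m, (floorWeight p.1 p.2 : R) * y ^ p.2) x n

theorem mk_sum_floorWeight_mul_one_sub :
    (PowerSeries.mk fun n => ∑ p ∈ antidiagonal n, (floorWeight p.1 p.2 : R) * y ^ p.2) *
        (1 - X ^ 3) =
      PowerSeries.mk fun n => ∑ p ∈ antidiagonal n, if p.1 ≤ p.2 then y ^ p.2 else 0 := by
  simpa using mk_mul_one_sub_C_mul_X_pow_eq_mk (u := (1 : R)) (k := 3) fun n => by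
    simpa using Nat.sum_antidiagonal_eq_add_of_eq (F := fun i j => (floorWeight i j : R) * y ^ j)
      (G := fun i j => if i ≤ j then y ^ j else 0) (u := 1) (k := 3) (l := 0) (fun i j => by
        rw [floorWeight_eq]
        simp only [Nat.zero_le, and_true, Nat.sub_zero]
        split_ifs <;> simp [add_mul]) n

theorem mk_sum_le_mul_one_sub :
    (PowerSeries.mk fun n => ∑ p ∈ antidiagonal n, if p.1 ≤ p.2 then y ^ p.2 else 0) *
        (1 - C y * X) =
      PowerSeries.mk fun n => ∑ p ∈ antidiagonal n, if p.1 = p.2 then y ^ p.2 else 0 := by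
  simpa using mk_mul_one_sub_C_mul_X_pow_eq_mk (k := 1) fun n => by
    simpa using Nat.sum_antidiagonal_eq_add_of_eq (F := fun i j => if i ≤ j then y ^ j else 0)
      (G := fun i j => if i = j then y ^ j else 0) (u := y) (k := 0) (l := 1) (fun i j => by
        rcases j with _ | j
        · simp
        · simp only [Nat.sub_zero, Nat.add_sub_cancel, Nat.zero_le, true_and, pow_succ']
          split_ifs <;> first | omega | simp) n

theorem mk_sum_eq_mul_one_sub :
    (PowerSeries.mk fun n => ∑ p ∈ antidiagonal n, if p.1 = p.2 then y ^ p.2 else 0) *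
        (1 - C y * X ^ 2) = 1 := by
  have h := mk_mul_one_sub_C_mul_X_pow_eq_mk (g := fun n => if n = 0 then (1 : R) else 0)
    (u := y) (k := 2) fun n => by
      simpa [eq_comm] using Nat.sum_antidiagonal_eq_add_of_eq
        (F := fun i j => if i = j then y ^ j else 0)
        (G := fun i j => if (i, j) = (0, 0) then 1 else 0) (u := y) (k := 1) (l := 1) (fun i j => by
          rcases i with _ | i <;> rcases j with _ | j <;> simp [pow_succ']) n
  rwa [show PowerSeries.mk (fun n => if n = 0 then (1 : R) else 0) = 1 from
    ext fun n => by rw [coeff_mk, coeff_one]] at h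

theorem mk_seriesCoeff_mul :
    PowerSeries.mk (seriesCoeff x y) *
        ((1 - X ^ 3) * (1 - C x * X ^ 3) * (1 - C y * X) * (1 - C y * X ^ 2)) = 1 := by
  rw [show ∀ A B C D E : R⟦X⟧, A * (B * C * D * E) = A * C * B * D * E by intros; ring,
    mk_seriesCoeff_mul_one_sub, mk_sum_floorWeight_mul_one_sub, mk_sum_le_mul_one_sub,
    mk_sum_eq_mul_one_sub]

/-- Over `R = ℚ[x1,x2]`, with
`a_m = ∑ (min(⌊j0/3⌋, ⌊(j2-j0)/3⌋+⌊j0/3⌋) + 1)·x1^j1 x2^j2`, summed over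
`(j0,j1,j2) ∈ ℕ³` with `j0+3j1+j2 = m` (min taken in `ℤ`, floors as `Int.fdiv`), we have
`(∑_m a_m t^m)·(1-t³)(1-t³·x1)(1-t·x2)(1-t²·x2) = 1` in `R[[t]]`. -/
theorem stmt_8 :
    (PowerSeries.mk (fun m : ℕ =>
      ∑ j ∈ (Finset.range (m + 1) ×ˢ Finset.range (m + 1) ×ˢ Finset.range (m + 1)).filter
          (fun j => j.1 + 3 * j.2.1 + j.2.2 = m),
        (((min (Int.fdiv (j.1 : ℤ) 3)
              (Int.fdiv ((j.2.2 : ℤ) - (j.1 : ℤ)) 3 + Int.fdiv (j.1 : ℤ) 3) + 1) : ℤ) :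
            MvPolynomial (Fin 2) ℚ) *
          MvPolynomial.X 0 ^ j.2.1 * MvPolynomial.X 1 ^ j.2.2)) *
      ((1 - PowerSeries.X ^ 3) *
        (1 - PowerSeries.C (MvPolynomial.X 0 : MvPolynomial (Fin 2) ℚ) * PowerSeries.X ^ 3) *
        (1 - PowerSeries.C (MvPolynomial.X 1 : MvPolynomial (Fin 2) ℚ) * PowerSeries.X) *
        (1 - PowerSeries.C (MvPolynomial.X 1 : MvPolynomial (Fin 2) ℚ) * PowerSeries.X ^ 2)) =
      1 :=
  mk_seriesCoeff_mul (MvPolynomial.X 0) (MvPolynomial.X 1)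
end

section
/- Suppose (q_a)_{a∈I} is a quasipolynomial solution of the Q-system such that each q_a has degree e_a ≥ 1 with constant leading coefficient c_a > 0. Then for every a ∈ I one has Σ_{b∈I} C(a,b)·e_b = 2; equivalently, 2·e_a − 2 = Σ_{b : C(a,b)<0} (−C(a,b))·e_b. In particular, if C is invertible as a matrix over ℚ, then e_a = 2·Σ_{b∈I} (C⁻¹)(a,b) for every a ∈ I. -/
/-!
Write `q(m) ~ c m^e` for the quasipolynomials and `F(m) = q(m)² - q(m+1) q(m-1)`. Since the floor
arguments on the right of the Q-system grow like `(C b a / C a b) m`, the Q-system gives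
`F(m) ~ K m^d` with `K > 0` and `d = ∑_{C a b < 0} (-C a b) e_b`; it remains to show `d = 2e - 2`.

Put `u(m) = q(m+1) / q(m)`, so that `u → 1` and `F(m+1) / (q(m) q(m+1)) = u(m) - u(m+1)`. Hence
`u(m) - u(m+1)` is asymptotic to a positive multiple of `m^(d - 2e)`. These differences telescope
and `u` converges, so they are summable, which forces `d - 2e ≤ -2`. If `d - 2e ≤ -3`, then
`u(m) - 1 = O(m^-2)` and `q(m) = q(m₀) ∏ u` would stay bounded, although `q(m) ~ c m^e` with `e ≥ 1`
by the first inequality. The matrix form is `C e = 2` solved by `C⁻¹`.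
-/

open Filter Topology Finset Polynomial

theorem Int.fdiv_eq_floor_div (a b : ℤ) : a.fdiv b = ⌊(a : ℝ) / b⌋ := by
  have hnat : ∀ (a : ℤ) (n : ℕ), a.fdiv n = ⌊(a : ℝ) / n⌋ := fun a n => by
    rw [Int.fdiv_eq_ediv_of_nonneg _ (Int.natCast_nonneg n), Int.floor_div_natCast,
      Int.floor_intCast]
  obtain ⟨n, rfl | rfl⟩ := b.eq_nat_or_neg
  · exact_mod_cast hnat a n
  · rw [← Int.neg_fdiv_neg, neg_neg, hnat]
    push_cast
    rw [div_neg, neg_div]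

theorem tendsto_of_forall_eq_apply_of_mem {α β ι : Type*} [TopologicalSpace β] {l : Filter α}
    {f : α → β} {g : ι → α → β} {b : β} (s : Finset ι) (σ : α → ι) (hσ : ∀ a, σ a ∈ s)
    (hf : ∀ a, f a = g (σ a) a) (hg : ∀ i ∈ s, Tendsto (g i) l (𝓝 b)) :
    Tendsto f l (𝓝 b) := by
  rw [tendsto_iff_forall_eventually_mem]
  intro U hU
  filter_upwards [(eventually_all_finset s).2 fun i hi => (hg i hi).eventually_mem hU] with a ha
  rw [hf]
  exact ha _ (hσ a)

theorem Polynomial.tendsto_eval_div_pow_natDegree {p : ℝ[X]} (hp : p ≠ 0) :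
    Tendsto (fun x : ℝ => p.eval x / x ^ p.natDegree) atTop (𝓝 p.leadingCoeff) := by
  have hdeg : p.degree = (X ^ p.natDegree : ℝ[X]).degree := by
    rw [degree_X_pow, degree_eq_natDegree hp]
  simpa using div_tendsto_atTop_leadingCoeff_div_of_degree_eq p _ hdeg

theorem tendsto_quasipolynomial_div_pow {q : ℤ → ℝ} {e ℓ : ℕ} {c : ℝ} (hc : c ≠ 0)
    (hℓ : 1 ≤ ℓ) (p : ℤ → ℝ[X])
    (hp : ∀ j : ℤ, 0 ≤ j → j < ℓ → (p j).natDegree = e ∧ (p j).coeff e = c)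
    (hq : ∀ m : ℤ, q m = (p (m % ℓ)).eval (m : ℝ)) :
    Tendsto (fun m : ℤ => q m / (m : ℝ) ^ e) atTop (𝓝 c) := by
  have hℓ' : (0 : ℤ) < ℓ := by exact_mod_cast hℓ
  refine tendsto_of_forall_eq_apply_of_mem (α := ℤ) (Finset.Ico 0 (ℓ : ℤ)) (· % (ℓ : ℤ))
    (fun m => Finset.mem_Ico.2 ⟨Int.emod_nonneg m hℓ'.ne', Int.emod_lt_of_pos m hℓ'⟩)
    (g := fun j m => (p j).eval (m : ℝ) / (m : ℝ) ^ e) (fun m => by rw [hq]) fun j hj => ?_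
  obtain ⟨hj0, hjℓ⟩ := Finset.mem_Ico.1 hj
  obtain ⟨hdeg, hcoeff⟩ := hp j hj0 hjℓ
  have hne : p j ≠ 0 := fun h => hc (by simp [← hcoeff, h])
  have := (tendsto_eval_div_pow_natDegree hne).comp tendsto_intCast_atTop_atTop
  rwa [leadingCoeff, hdeg, hcoeff] at this

theorem tendsto_div_of_abs_sub_mul_le {s : ℤ → ℝ} {ρ B : ℝ} (h : ∀ m, |s m - ρ * m| ≤ B) :
    Tendsto (fun m : ℤ => s m / m) atTop (𝓝 ρ) := by
  have hB : Tendsto (fun m : ℤ => B / m) atTop (𝓝 0) :=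
    tendsto_const_nhds.div_atTop tendsto_intCast_atTop_atTop
  have herr : Tendsto (fun m : ℤ => (s m - ρ * m) / m) atTop (𝓝 0) := by
    refine squeeze_zero_norm' ?_ hB
    filter_upwards [eventually_gt_atTop 0] with m hm
    have hm' : (0 : ℝ) < m := by exact_mod_cast hm
    rw [norm_div, Real.norm_eq_abs, Real.norm_eq_abs, abs_of_pos hm']
    exact div_le_div_of_nonneg_right (h m) hm'.le
  have := herr.const_add ρ
  rw [add_zero] at this
  refine this.congr' ?_
  filter_upwards [eventually_ne_atTop 0] with m hm
  have hm' : (m : ℝ) ≠ 0 := by exact_mod_cast hm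
  field_simp
  ring

theorem tendsto_comp_div_pow {f : ℤ → ℝ} {e : ℕ} {c : ℝ}
    (hf : Tendsto (fun m : ℤ => f m / (m : ℝ) ^ e) atTop (𝓝 c)) {s : ℤ → ℤ} {ρ : ℝ}
    (hρ : 0 < ρ) (hs : Tendsto (fun m : ℤ => (s m : ℝ) / m) atTop (𝓝 ρ)) :
    Tendsto (fun m : ℤ => f (s m) / (m : ℝ) ^ e) atTop (𝓝 (c * ρ ^ e)) := by
  have hstop : Tendsto s atTop atTop := by
    rw [← tendsto_intCast_atTop_iff (R := ℝ)]
    refine (hs.pos_mul_atTop hρ tendsto_intCast_atTop_atTop).congr' ?_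
    filter_upwards [eventually_ne_atTop 0] with m hm
    exact div_mul_cancel₀ _ (by exact_mod_cast hm)
  refine ((hf.comp hstop).mul (hs.pow e)).congr' ?_
  filter_upwards [eventually_ne_atTop 0, hstop.eventually_ne_atTop 0] with m hm hsm
  have hsm' : (s m : ℝ) ≠ 0 := by exact_mod_cast hsm
  simp only [Function.comp_apply]
  rw [div_pow, div_mul_div_comm, mul_comm (f (s m)), mul_div_mul_left _ _ (pow_ne_zero _ hsm')]

theorem tendsto_comp_add_div_pow {f : ℤ → ℝ} {e : ℕ} {c : ℝ}
    (hf : Tendsto (fun m : ℤ => f m / (m : ℝ) ^ e) atTop (𝓝 c)) (k : ℤ) :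
    Tendsto (fun m : ℤ => f (m + k) / (m : ℝ) ^ e) atTop (𝓝 c) := by
  simpa using tendsto_comp_div_pow hf one_pos
    (tendsto_div_of_abs_sub_mul_le (s := fun m : ℤ => ((m + k : ℤ) : ℝ)) (B := |k|)
      fun m => by push_cast; rw [one_mul, add_sub_cancel_left])

theorem tendsto_comp_fdiv_div_pow {f : ℤ → ℝ} {e : ℕ} {c : ℝ}
    (hf : Tendsto (fun m : ℤ => f m / (m : ℝ) ^ e) atTop (𝓝 c)) {x y : ℤ}
    (hxy : 0 < (x : ℝ) / y) (k : ℤ) :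
    Tendsto (fun m : ℤ => f ((x * m - k).fdiv y) / (m : ℝ) ^ e) atTop
      (𝓝 (c * ((x : ℝ) / y) ^ e)) := by
  refine tendsto_comp_div_pow hf hxy
    (tendsto_div_of_abs_sub_mul_le (B := 1 + |(k : ℝ) / y|) fun m => ?_)
  set r : ℝ := ((x * m - k : ℤ) : ℝ) / y
  have hr : r - (x : ℝ) / y * m = -((k : ℝ) / y) := by simp only [r]; push_cast; ring
  have hfloor : |(⌊r⌋ : ℝ) - r| ≤ 1 := by
    rw [abs_le]
    constructor <;> linarith [Int.floor_le r, Int.sub_one_lt_floor r]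
  rw [Int.fdiv_eq_floor_div]
  calc |(⌊r⌋ : ℝ) - x / y * m| = |((⌊r⌋ : ℝ) - r) + (r - x / y * m)| := by ring_nf
    _ ≤ |(⌊r⌋ : ℝ) - r| + |r - x / y * m| := abs_add_le _ _
    _ ≤ 1 + |(k : ℝ) / y| := by rw [hr, abs_neg]; gcongr

theorem tendsto_prod_div_pow_sum {ι α : Type*} {l : Filter α} {s : Finset ι} {f : ι → α → ℝ}
    {x : α → ℝ} {e : ι → ℕ} {c : ι → ℝ}
    (h : ∀ i ∈ s, Tendsto (fun a => f i a / x a ^ e i) l (𝓝 (c i))) :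
    Tendsto (fun a => (∏ i ∈ s, f i a) / x a ^ ∑ i ∈ s, e i) l (𝓝 (∏ i ∈ s, c i)) := by
  simpa only [← Finset.prod_pow_eq_pow_sum, ← Finset.prod_div_distrib] using
    tendsto_finsetProd s h

theorem summable_sub_succ_of_tendsto {u : ℕ → ℝ} {a : ℝ} (hu : Tendsto u atTop (𝓝 a))
    (hanti : ∀ᶠ n in atTop, u (n + 1) ≤ u n) : Summable fun n => u n - u (n + 1) := by
  obtain ⟨N, hN⟩ := eventually_atTop.1 hanti
  rw [← summable_nat_add_iff N]
  refine ((hasSum_iff_tendsto_nat_of_nonneg (fun n => sub_nonneg.2 (hN _ (by omega)))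
    (u N - a)).2 ?_).summable
  refine ((hu.comp (tendsto_add_atTop_nat N)).const_sub (u N)).congr fun n => ?_
  simpa [add_right_comm] using (Finset.sum_range_sub' (fun i => u (i + N)) n).symm

theorem eventually_le_of_sub_succ_le {v g : ℕ → ℝ} {a : ℝ} (hv : Tendsto v atTop (𝓝 a))
    (hg : Tendsto g atTop (𝓝 a)) (h : ∀ᶠ n in atTop, v n - v (n + 1) ≤ g n - g (n + 1)) :
    ∀ᶠ n in atTop, v n ≤ g n := by
  obtain ⟨N, hN⟩ := eventually_atTop.1 h
  filter_upwards [eventually_ge_atTop N] with n hn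
  have hmono : Monotone fun k => v (k + n) - g (k + n) :=
    monotone_nat_of_le_succ fun k => by
      have := hN (k + n) (by omega)
      rw [add_right_comm]
      linarith
  have hlim := (hv.sub hg).comp (tendsto_add_atTop_nat n)
  rw [sub_self] at hlim
  simpa using hmono.ge_of_tendsto hlim 0

theorem not_eventually_le_one_add_mul_of_tendsto_atTop {q g : ℕ → ℝ}
    (hq : Tendsto q atTop atTop) (hg : Summable g) :
    ¬ ∀ᶠ n in atTop, q (n + 1) ≤ (1 + g n) * q n := by
  intro h
  obtain ⟨N, hN⟩ := eventually_atTop.1 (h.and (hq.eventually_ge_atTop 0))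
  obtain ⟨B, hB⟩ := ((summable_nat_add_iff N).2 hg).tendsto_sum_tsum_nat.bddAbove_range
  have hbound : ∀ k, q (k + N) ≤ Real.exp (∑ i ∈ range k, g (i + N)) * q N := by
    intro k
    induction k with
    | zero => simp
    | succ k ih =>
      obtain ⟨hstep, hpos⟩ := hN (k + N) (by omega)
      rw [Finset.sum_range_succ, Real.exp_add, add_right_comm]
      calc q (k + N + 1) ≤ (1 + g (k + N)) * q (k + N) := hstep
        _ ≤ Real.exp (g (k + N)) * q (k + N) := by
          gcongr
          linarith [Real.add_one_le_exp (g (k + N))]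
        _ ≤ Real.exp (g (k + N)) * (Real.exp (∑ i ∈ range k, g (i + N)) * q N) := by gcongr
        _ = _ := by ring
  obtain ⟨k, hk⟩ :=
    ((hq.comp (tendsto_add_atTop_nat N)).eventually_gt_atTop (Real.exp B * q N)).exists
  have hexp := mul_le_mul_of_nonneg_right (Real.exp_le_exp.2 (hB ⟨k, rfl⟩)) (hN N le_rfl).2
  simp only [Function.comp_apply] at hk
  linarith [hbound k]

theorem two_le_of_tendsto_sub_succ_mul_zpow {u : ℕ → ℝ} {a L : ℝ} {k : ℤ}
    (hu : Tendsto u atTop (𝓝 a)) (hL : 0 < L)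
    (h : Tendsto (fun n : ℕ => (u n - u (n + 1)) * (n : ℝ) ^ k) atTop (𝓝 L)) : 2 ≤ k := by
  by_contra! hk
  have hlow : ∀ᶠ n : ℕ in atTop, L / 2 * (1 / n) ≤ u n - u (n + 1) := by
    filter_upwards [h.eventually (eventually_gt_nhds (half_lt_self hL)), eventually_ge_atTop 1]
      with n hn hn1
    have hn1' : (1 : ℝ) ≤ n := by exact_mod_cast hn1
    have hpow : (n : ℝ) ^ k ≤ n := by simpa using zpow_le_zpow_right₀ hn1' (show k ≤ 1 by omega)
    have hw : 0 < u n - u (n + 1) :=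
      pos_of_mul_pos_left (hn.trans' (by positivity)) (zpow_pos (by positivity) k).le
    rw [mul_one_div, div_le_iff₀ (by positivity)]
    nlinarith
  have hsum := summable_sub_succ_of_tendsto hu
    (hlow.mono fun n hn => sub_nonneg.1 (hn.trans' (by positivity)))
  refine Real.not_summable_one_div_natCast
    (.of_norm_bounded_eventually_nat (hsum.mul_left (2 / L)) ?_)
  filter_upwards [hlow] with n hn
  rw [Real.norm_eq_abs, abs_of_nonneg (by positivity)]
  calc 1 / (n : ℝ) = 2 / L * (L / 2 * (1 / n)) := by field_simp
    _ ≤ 2 / L * (u n - u (n + 1)) := by gcongr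

theorem le_two_of_tendsto_ratio_sub_succ_mul_zpow {q : ℕ → ℝ} {L : ℝ} {k : ℤ}
    (hq : Tendsto q atTop atTop) (hu : Tendsto (fun n => q (n + 1) / q n) atTop (𝓝 1))
    (hL : 0 < L)
    (h : Tendsto (fun n : ℕ => (q (n + 1) / q n - q (n + 2) / q (n + 1)) * (n : ℝ) ^ k)
      atTop (𝓝 L)) : k ≤ 2 := by
  by_contra! hk
  set g : ℕ → ℝ := fun n => 4 * L / (n : ℝ) ^ 2
  -- `2L / n³ ≤ g n - g (n + 1)`, because `1 / n³ ≤ 2 (1 / n² - 1 / (n + 1)²)` for `n ≥ 1`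
  have hstep : ∀ᶠ n : ℕ in atTop,
      (q (n + 1) / q n - 1) - (q (n + 1 + 1) / q (n + 1) - 1) ≤ g n - g (n + 1) := by
    filter_upwards [h.eventually (eventually_lt_nhds (show L < 2 * L by linarith)),
      eventually_ge_atTop 1] with n hn hn1
    have hx : (1 : ℝ) ≤ n := by exact_mod_cast hn1
    have hpow : (n : ℝ) ^ 3 ≤ (n : ℝ) ^ k := by
      simpa using zpow_le_zpow_right₀ hx (show (3 : ℤ) ≤ k by omega)
    rw [sub_sub_sub_cancel_right]
    generalize q (n + 1) / q n - q (n + 1 + 1) / q (n + 1) = w at hn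
    have hw3 : w * (n : ℝ) ^ 3 ≤ 2 * L := by
      rcases le_or_gt 0 w with hw | hw
      · nlinarith [mul_le_mul_of_nonneg_left hpow hw]
      · nlinarith [pow_pos (show (0 : ℝ) < n by linarith) 3]
    simp only [g]
    push_cast
    rw [div_sub_div _ _ (by positivity) (by positivity), le_div_iff₀ (by positivity)]
    refine le_of_mul_le_mul_right ?_ (show (0 : ℝ) < n by linarith)
    calc w * ((n : ℝ) ^ 2 * (n + 1) ^ 2) * n = w * (n : ℝ) ^ 3 * (n + 1) ^ 2 := by ring
      _ ≤ 2 * L * (n + 1) ^ 2 := by gcongr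
      _ ≤ (4 * L * (n + 1) ^ 2 - n ^ 2 * (4 * L)) * n := by
        nlinarith [mul_nonneg hL.le (show (0 : ℝ) ≤ n ^ 2 - 1 by nlinarith)]
  have hg : Tendsto g atTop (𝓝 0) := by
    simpa using (tendsto_const_nhds (x := 4 * L)).div_atTop
      ((tendsto_pow_atTop two_ne_zero).comp (tendsto_natCast_atTop_atTop (R := ℝ)))
  have hle := eventually_le_of_sub_succ_le (by simpa using hu.sub_const 1) hg hstep
  have hgsum : Summable g := by
    simpa [g, div_eq_mul_inv] using
      (Real.summable_one_div_nat_pow.2 one_lt_two).mul_left (4 * L)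
  refine not_eventually_le_one_add_mul_of_tendsto_atTop hq hgsum ?_
  filter_upwards [hle, hq.eventually_gt_atTop 0] with n hn hqn
  rw [← div_le_iff₀ hqn]
  linarith

theorem add_two_eq_two_mul_of_tendsto {q : ℤ → ℝ} {e d : ℕ} {c K : ℝ} (hc : 0 < c) (hK : 0 < K)
    (hq : Tendsto (fun m : ℤ => q m / (m : ℝ) ^ e) atTop (𝓝 c))
    (hF : Tendsto (fun m : ℤ => (q m ^ 2 - q (m + 1) * q (m - 1)) / (m : ℝ) ^ d) atTop (𝓝 K)) :
    d + 2 = 2 * e := by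
  set Q : ℕ → ℝ := fun n => q n
  have hQ : ∀ k : ℕ, Tendsto (fun n : ℕ => Q (n + k) / (n : ℝ) ^ e) atTop (𝓝 c) := fun k => by
    simpa [Q, Function.comp_def] using
      (tendsto_comp_add_div_pow hq k).comp tendsto_natCast_atTop_atTop
  have hF' : Tendsto (fun n : ℕ => (Q (n + 1) ^ 2 - Q (n + 2) * Q n) / (n : ℝ) ^ d)
      atTop (𝓝 K) := by
    refine ((tendsto_comp_add_div_pow hF 1).comp tendsto_natCast_atTop_atTop).congr fun n => ?_
    simp only [Q, Function.comp_apply, Int.cast_natCast]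
    push_cast
    ring_nf
  have hQ0 : Tendsto (fun n : ℕ => Q n / (n : ℝ) ^ e) atTop (𝓝 c) := hQ 0
  have hpos : ∀ᶠ n : ℕ in atTop, 0 < Q n ∧ 0 < Q (n + 1) ∧ (0 : ℝ) < n := by
    filter_upwards [hQ0.eventually (eventually_gt_nhds hc),
      (hQ 1).eventually (eventually_gt_nhds hc), eventually_gt_atTop 0] with n h0 h1 hn
    have hne : (0 : ℝ) < (n : ℝ) ^ e := pow_pos (by exact_mod_cast hn) e
    exact ⟨(div_pos_iff_of_pos_right hne).1 h0, (div_pos_iff_of_pos_right hne).1 h1,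
      by exact_mod_cast hn⟩
  have hu : Tendsto (fun n : ℕ => Q (n + 1) / Q n) atTop (𝓝 1) := by
    refine (div_self hc.ne' ▸ (hQ 1).div hQ0 hc.ne').congr' ?_
    filter_upwards [hpos] with n ⟨_, _, hn⟩
    exact div_div_div_cancel_right₀ (pow_pos hn e).ne' _ _
  have hw : Tendsto (fun n : ℕ => (Q (n + 1) / Q n - Q (n + 2) / Q (n + 1)) *
      (n : ℝ) ^ ((2 * e : ℕ) - d : ℤ)) atTop (𝓝 (K / (c * c))) := by
    refine (hF'.div (hQ0.mul (hQ 1)) (by positivity)).congr' ?_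
    filter_upwards [hpos] with n ⟨h0, h1, hn⟩
    simp only [Pi.div_apply]
    rw [zpow_sub₀ hn.ne', zpow_natCast, zpow_natCast]
    field_simp
    ring
  have hlow := two_le_of_tendsto_sub_succ_mul_zpow hu (by positivity) hw
  have hQtop : Tendsto Q atTop atTop := by
    refine (hQ0.pos_mul_atTop hc ((tendsto_pow_atTop (by omega : e ≠ 0)).comp
      tendsto_natCast_atTop_atTop)).congr' ?_
    filter_upwards [hpos] with n ⟨_, _, hn⟩
    exact div_mul_cancel₀ _ (pow_pos hn e).ne'
  have hup := le_two_of_tendsto_ratio_sub_succ_mul_zpow hQtop hu (by positivity) hw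
  omega

theorem sum_mul_eq_two_mul_sub_sum_neg {I : Type*} [Fintype I] (C : I → I → ℤ)
    (hdiag : ∀ a, C a a = 2) (hoff : ∀ a b, a ≠ b → C a b ≤ 0) (v : I → ℤ) (a : I) :
    ∑ b, C a b * v b = 2 * v a - ∑ b ∈ univ.filter (fun b => C a b < 0), -C a b * v b := by
  rw [← sum_filter_not_add_sum_filter univ (fun b => C a b < 0), sum_eq_single_of_mem a
    (by simp [hdiag]) fun b hb hba => ?_, hdiag]
  · simp only [neg_mul, sum_neg_distrib]
    ring
  · rw [le_antisymm (hoff a b (Ne.symm hba)) (by simpa using hb), zero_mul]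

theorem two_mul_sub_two_eq_sum_of_qSystem {I : Type*} [Fintype I] (C : I → I → ℤ)
    (hsymzero : ∀ a b, (C a b < 0 ↔ C b a < 0)) (q : I → ℤ → ℝ) (e : I → ℕ) (c : I → ℝ)
    (hc : ∀ a, 0 < c a)
    (hlim : ∀ a, Tendsto (fun m : ℤ => q a m / (m : ℝ) ^ e a) atTop (𝓝 (c a)))
    (hQ : ∀ a, ∀ m : ℤ,
      q a m ^ 2 - q a (m + 1) * q a (m - 1) =
        ∏ b ∈ Finset.univ.filter (fun b => C a b < 0),
          ∏ k ∈ Finset.range (-(C a b)).toNat,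
            q b (Int.fdiv (C b a * m - (k : ℤ)) (C a b))) (a : I) :
    2 * (e a : ℤ) - 2 = ∑ b ∈ univ.filter (fun b => C a b < 0), -C a b * (e b : ℤ) := by
  have hratio : ∀ b ∈ univ.filter (fun b => C a b < 0), 0 < (C b a : ℝ) / C a b := fun b hb => by
    have hab := (mem_filter.1 hb).2
    exact div_pos_of_neg_of_neg (by exact_mod_cast (hsymzero a b).1 hab) (by exact_mod_cast hab)
  have hF := tendsto_prod_div_pow_sum fun b hb =>
    tendsto_prod_div_pow_sum fun k (_ : k ∈ range (-C a b).toNat) =>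
      tendsto_comp_fdiv_div_pow (hlim b) (hratio b hb) k
  simp_rw [← hQ a] at hF
  have hdeg := add_two_eq_two_mul_of_tendsto (hc a)
    (prod_pos fun b hb => prod_pos fun _ _ => mul_pos (hc b) (pow_pos (hratio b hb) _))
    (hlim a) hF
  have hsum : ((∑ b ∈ univ.filter (fun b => C a b < 0), ∑ _k ∈ range (-C a b).toNat, e b : ℕ) : ℤ)
      = ∑ b ∈ univ.filter (fun b => C a b < 0), -C a b * (e b : ℤ) := by
    push_cast
    refine sum_congr rfl fun b hb => ?_
    rw [sum_const, card_range, nsmul_eq_mul,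
      Int.toNat_of_nonneg (by linarith [(mem_filter.1 hb).2])]
  omega

theorem stmt_10_general {I : Type*} [Fintype I] [DecidableEq I]
    (C : I → I → ℤ)
    (hdiag : ∀ a, C a a = 2)
    (hoff : ∀ a b, a ≠ b → C a b ≤ 0)
    (hsymzero : ∀ a b, (C a b < 0 ↔ C b a < 0))
    (q : I → ℤ → ℝ) (e : I → ℕ) (c : I → ℝ)
    (hc : ∀ a, 0 < c a)
    (hqp : ∀ a, ∃ ℓ : ℕ, 1 ≤ ℓ ∧ ∃ p : ℤ → Polynomial ℝ,
      (∀ j : ℤ, 0 ≤ j → j < (ℓ : ℤ) →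
        (p j).natDegree = e a ∧ (p j).coeff (e a) = c a) ∧
      (∀ m : ℤ, q a m = (p (m % (ℓ : ℤ))).eval (m : ℝ)))
    (hQ : ∀ a, ∀ m : ℤ,
      q a m ^ 2 - q a (m + 1) * q a (m - 1) =
        ∏ b ∈ Finset.univ.filter (fun b => C a b < 0),
          ∏ k ∈ Finset.range (-(C a b)).toNat,
            q b (Int.fdiv (C b a * m - (k : ℤ)) (C a b))) :
    (∀ a, ∑ b : I, C a b * (e b : ℤ) = 2) ∧
    (∀ a, 2 * (e a : ℤ) - 2 =
      ∑ b ∈ Finset.univ.filter (fun b => C a b < 0), (-(C a b)) * (e b : ℤ)) ∧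
    (∀ M : Matrix I I ℚ, (∀ a b, M a b = (C a b : ℚ)) → IsUnit M.det →
      ∀ a, (e a : ℚ) = 2 * ∑ b : I, M⁻¹ a b) := by
  have hlim : ∀ a, Tendsto (fun m : ℤ => q a m / (m : ℝ) ^ e a) atTop (𝓝 (c a)) := fun a => by
    obtain ⟨ℓ, hℓ, p, hp, hq⟩ := hqp a
    exact tendsto_quasipolynomial_div_pow (hc a).ne' hℓ p hp hq
  have hdeg := two_mul_sub_two_eq_sum_of_qSystem C hsymzero q e c hc hlim hQ
  have hsum : ∀ a, ∑ b, C a b * (e b : ℤ) = 2 := fun a => by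
    rw [sum_mul_eq_two_mul_sub_sum_neg C hdiag hoff, ← hdeg a]
    ring
  refine ⟨hsum, hdeg, fun M hM hdet a => ?_⟩
  have hMe : M.mulVec (fun b => (e b : ℚ)) = fun _ => 2 := funext fun a => by
    simp only [Matrix.mulVec, dotProduct, hM]
    exact_mod_cast hsum a
  have he : (fun b => (e b : ℚ)) = M⁻¹.mulVec fun _ => 2 := by
    rw [← hMe, Matrix.mulVec_mulVec, Matrix.nonsing_inv_mul M hdet, Matrix.one_mulVec]
  rw [congrFun he a]
  simp only [Matrix.mulVec, dotProduct, ← sum_mul]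
  ring

/-- Degrees of a quasipolynomial solution of the Q-system.  `C` is a generalized Cartan
matrix on a finite set `I`; `(q a)` is a family of quasipolynomials (each given piecewise
by polynomial constituents of degree `e a` with constant leading coefficient `c a > 0`)
satisfying the Q-system.  Then `∑_b C a b · e b = 2` for every `a`, equivalently
`2·e a − 2 = ∑_{C a b < 0} (−C a b)·e b`; and if the Cartan matrix is invertible over `ℚ`
then `e a = 2·∑_b (C⁻¹) a b`. -/
theorem stmt_10 {I : Type*} [Fintype I] [DecidableEq I]
    (C : I → I → ℤ)
    (hdiag : ∀ a, C a a = 2)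
    (hoff : ∀ a b, a ≠ b → C a b ≤ 0)
    (hsymzero : ∀ a b, (C a b < 0 ↔ C b a < 0))
    (q : I → ℤ → ℝ) (e : I → ℕ) (c : I → ℝ)
    (he : ∀ a, 1 ≤ e a) (hc : ∀ a, 0 < c a)
    (hqp : ∀ a, ∃ ℓ : ℕ, 1 ≤ ℓ ∧ ∃ p : ℤ → Polynomial ℝ,
      (∀ j : ℤ, 0 ≤ j → j < (ℓ : ℤ) →
        (p j).natDegree = e a ∧ (p j).coeff (e a) = c a) ∧
      (∀ m : ℤ, q a m = (p (m % (ℓ : ℤ))).eval (m : ℝ)))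
    (hQ : ∀ a, ∀ m : ℤ,
      q a m ^ 2 - q a (m + 1) * q a (m - 1) =
        ∏ b ∈ Finset.univ.filter (fun b => C a b < 0),
          ∏ k ∈ Finset.range (-(C a b)).toNat,
            q b (Int.fdiv (C b a * m - (k : ℤ)) (C a b))) :
    (∀ a, ∑ b : I, C a b * (e b : ℤ) = 2) ∧
    (∀ a, 2 * (e a : ℤ) - 2 =
      ∑ b ∈ Finset.univ.filter (fun b => C a b < 0), (-(C a b)) * (e b : ℤ)) ∧
    (∀ M : Matrix I I ℚ, (∀ a b, M a b = (C a b : ℚ)) → IsUnit M.det →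
      ∀ a, (e a : ℚ) = 2 * ∑ b : I, M⁻¹ a b) :=
  stmt_10_general C hdiag hoff hsymzero q e c hc hqp hQ
end

section
/- Suppose (q_a)_{a∈I} is a quasipolynomial solution of the Q-system such that each q_a has degree e_a ≥ 1 with constant leading coefficient c_a > 0. Then for every a ∈ I, in any representation of q_a by constituent polynomials p_{a,0}, …, p_{a,ℓ−1} (with q_a(m) = p_{a, m mod ℓ}(m) for all m ∈ ℤ and every p_{a,j} of degree e_a), all the constituents p_{a,j} have the same coefficient of x^{e_a − 1} and the same coefficient of x^{e_a − 2}; that is, the next two leading coefficients of q_a are also independent of m. -/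
/-!
On each residue class `r + Lℤ` modulo a common period `L` of all the `q_b`, both sides of the
Q-system are polynomials in `m`, hence equal as polynomials. With `P_r` the constituents of `q_a`,
the left side is the Casoratian `P_r(x)² - P_{r+1}(x+1) P_{r-1}(x-1)`, while the right side is a
product of constituents of the `q_b` composed with affine maps, whose degree and leading
coefficient do not depend on `r`.

On the left the `x^{2e}` terms cancel and the `x^{2e-1}` coefficient is
`c (2 b_r - b_{r+1} - b_{r-1})`, where `b_r` is the `x^{e-1}` coefficient of `P_r`. A periodic
sequence with constant second difference is constant, so `b` is constant. Then the `x^{2e-1}`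
coefficient vanishes, the common degree drops to at most `2e - 2`, and the `x^{2e-2}` coefficient
`c (2 d_r - d_{r+1} - d_{r-1}) + e c²` makes the `x^{e-2}` coefficients `d_r` constant in the same
way.
-/

open Polynomial

section

variable {R : Type*} [CommRing R]

namespace Polynomial

variable {P Q : R[X]} {n : ℕ}

theorem taylor_coeff_of_natDegree_le (t : R) (hP : P.natDegree ≤ n) :
    (taylor t P).coeff n = P.coeff n := by
  rw [taylor_coeff, eval_eq_sum_range' (n := 1) (by have := P.natDegree_hasseDeriv_le n; omega)]
  simp [hasseDeriv_coeff]

theorem taylor_coeff_of_natDegree_le_succ (t : R) (hP : P.natDegree ≤ n + 1) :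
    (taylor t P).coeff n = P.coeff n + (n + 1) * t * P.coeff (n + 1) := by
  rw [taylor_coeff, eval_eq_sum_range' (n := 2) (by have := P.natDegree_hasseDeriv_le n; omega)]
  simp only [Finset.sum_range_succ, Finset.sum_range_zero, hasseDeriv_coeff, zero_add]
  rw [add_comm 1 n, Nat.choose_self, Nat.choose_succ_self_right]
  push_cast
  ring

theorem taylor_coeff_of_natDegree_le_add_two (t : R) (hP : P.natDegree ≤ n + 2) :
    (taylor t P).coeff n =
      P.coeff n + (n + 1) * t * P.coeff (n + 1) + (n + 2).choose 2 * t ^ 2 * P.coeff (n + 2) := by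
  rw [taylor_coeff, eval_eq_sum_range' (n := 3) (by have := P.natDegree_hasseDeriv_le n; omega)]
  simp only [Finset.sum_range_succ, Finset.sum_range_zero, hasseDeriv_coeff, zero_add]
  rw [add_comm 1 n, add_comm 2 n, Nat.choose_self, Nat.choose_succ_self_right,
    Nat.choose_symm_add]
  push_cast
  ring

theorem coeff_mul_of_natDegree_le_succ (hP : P.natDegree ≤ n + 1) (hQ : Q.natDegree ≤ n + 1) :
    (P * Q).coeff (2 * n + 1) = P.coeff (n + 1) * Q.coeff n + P.coeff n * Q.coeff (n + 1) := by
  rw [coeff_mul, Finset.Nat.sum_antidiagonal_eq_sum_range_succ_mk,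
    ← Finset.sum_subset (s₁ := {n, n + 1})]
  · rw [Finset.sum_pair (by omega), show 2 * n + 1 - n = n + 1 by omega,
      show 2 * n + 1 - (n + 1) = n by omega, add_comm]
  · intro i hi
    simp only [Finset.mem_insert, Finset.mem_singleton, Finset.mem_range] at hi ⊢
    omega
  · intro i _ hi
    simp only [Finset.mem_insert, Finset.mem_singleton, not_or] at hi
    rcases lt_or_gt_of_ne hi.2 with h | h
    · rw [coeff_eq_zero_of_natDegree_lt (p := Q) (by omega), mul_zero]
    · rw [coeff_eq_zero_of_natDegree_lt (p := P) (by omega), zero_mul]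

theorem coeff_mul_of_natDegree_le_add_two (hP : P.natDegree ≤ n + 2) (hQ : Q.natDegree ≤ n + 2) :
    (P * Q).coeff (2 * n + 2) = P.coeff (n + 2) * Q.coeff n + P.coeff (n + 1) * Q.coeff (n + 1)
      + P.coeff n * Q.coeff (n + 2) := by
  rw [coeff_mul, Finset.Nat.sum_antidiagonal_eq_sum_range_succ_mk,
    ← Finset.sum_subset (s₁ := {n, n + 1, n + 2})]
  · rw [Finset.sum_insert (by simp), Finset.sum_pair (by omega),
      show 2 * n + 2 - n = n + 2 by omega, show 2 * n + 2 - (n + 1) = n + 1 by omega,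
      show 2 * n + 2 - (n + 2) = n by omega]
    ring
  · intro i hi
    simp only [Finset.mem_insert, Finset.mem_singleton, Finset.mem_range] at hi ⊢
    omega
  · intro i _ hi
    simp only [Finset.mem_insert, Finset.mem_singleton, not_or] at hi
    rcases lt_or_gt_of_ne hi.2.2 with h | h
    · rw [coeff_eq_zero_of_natDegree_lt (p := Q) (by omega), mul_zero]
    · rw [coeff_eq_zero_of_natDegree_lt (p := P) (by omega), zero_mul]

end Polynomial

def IsConstituent (f : ℤ → R) (L r : ℤ) (P : R[X]) : Prop :=
  ∀ t : ℤ, f (r + L * t) = P.eval ((r + L * t : ℤ) : R)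

namespace IsConstituent

variable {f g : ℤ → R} {L r : ℤ} {P Q : R[X]}

theorem eq [IsDomain R] [CharZero R] (hL : L ≠ 0) (hP : IsConstituent f L r P)
    (hQ : IsConstituent f L r Q) : P = Q := by
  refine eq_of_infinite_eval_eq P Q (Set.infinite_of_injective_forall_mem
    (f := fun t : ℤ => ((r + L * t : ℤ) : R)) ?_ fun t => ?_)
  · intro t t' h
    simpa [hL] using h
  · simp only [Set.mem_ofPred_eq, ← hP t, ← hQ t]

theorem of_forall_eq_eval_emod {ℓ : ℤ} {p : ℤ → R[X]} (hf : ∀ m, f m = (p (m % ℓ)).eval (m : R))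
    (hℓL : ℓ ∣ L) (r : ℤ) : IsConstituent f L r (p (r % ℓ)) := by
  obtain ⟨u, rfl⟩ := hℓL
  intro t
  rw [hf, mul_assoc, Int.add_mul_emod_self_left]

theorem sub (hf : IsConstituent f L r P) (hg : IsConstituent g L r Q) :
    IsConstituent (fun m => f m - g m) L r (P - Q) := fun t => by
  simp [hf t, hg t]

theorem mul (hf : IsConstituent f L r P) (hg : IsConstituent g L r Q) :
    IsConstituent (fun m => f m * g m) L r (P * Q) := fun t => by
  simp [hf t, hg t]

theorem pow (hf : IsConstituent f L r P) (k : ℕ) :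
    IsConstituent (fun m => f m ^ k) L r (P ^ k) := fun t => by
  simp [hf t]

theorem prod {ι : Type*} (s : Finset ι) {f : ι → ℤ → R} {P : ι → R[X]}
    (h : ∀ i ∈ s, IsConstituent (f i) L r (P i)) :
    IsConstituent (fun m => ∏ i ∈ s, f i m) L r (∏ i ∈ s, P i) := fun t => by
  simp only [eval_prod]
  exact Finset.prod_congr rfl fun i hi => h i hi t

theorem comp_add (s : ℤ) (h : IsConstituent f L (r + s) P) :
    IsConstituent (fun m => f (m + s)) L r (taylor (s : R) P) := fun t => by
  show f (r + L * t + s) = _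
  rw [taylor_eval, add_right_comm, h t]
  push_cast
  ring_nf

theorem comp_fdiv {α β k S : ℤ} {γ : R} (hα : α ≠ 0) (hS : α * S = β * L) (hγ : γ * L = S)
    (h : IsConstituent g S (Int.fdiv (β * r - k) α) Q) :
    IsConstituent (fun m => g (Int.fdiv (β * m - k) α)) L r
      (Q.comp (C γ * X + C ((Int.fdiv (β * r - k) α : R) - γ * r))) := fun t => by
  show g _ = _
  have hfdiv : Int.fdiv (β * (r + L * t) - k) α = Int.fdiv (β * r - k) α + S * t := by
    rw [← Int.add_mul_fdiv_left _ _ hα, ← mul_assoc, hS]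
    ring_nf
  rw [hfdiv, h t, eval_comp]
  congr 1
  simp only [eval_add, eval_mul, eval_C, eval_X]
  push_cast
  linear_combination -(t : R) * hγ

end IsConstituent

section Periodic

theorem eq_add_mul_of_forall_add_one_eq_add {f : ℤ → R} {d : R} (h : ∀ r, f (r + 1) = f r + d)
    (n : ℤ) : f n = f 0 + n * d := by
  induction n using Int.induction_on with
  | zero => simp
  | succ n ih => rw [h, ih]; push_cast; ring
  | pred n ih =>
    have := h (-n - 1)
    rw [sub_add_cancel] at this
    rw [this] at ih
    push_cast at ih ⊢
    linear_combination ih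

variable [IsDomain R] [CharZero R]

theorem Function.Periodic.eq_zero_of_forall_add_one_eq_add {f : ℤ → R} {ℓ : ℤ} {d : R}
    (hper : Function.Periodic f ℓ) (hℓ : ℓ ≠ 0) (h : ∀ r, f (r + 1) = f r + d) : d = 0 := by
  have := eq_add_mul_of_forall_add_one_eq_add h ℓ
  rw [← zero_add ℓ, hper, zero_add, left_eq_add, mul_eq_zero] at this
  exact this.resolve_left (by exact_mod_cast hℓ)

theorem Function.Periodic.eq_of_second_difference_eq {f : ℤ → R} {ℓ : ℤ}
    (hper : Function.Periodic f ℓ) (hℓ : ℓ ≠ 0)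
    (h : ∀ r, 2 * f r - f (r + 1) - f (r - 1) = 2 * f 0 - f 1 - f (0 - 1)) (r : ℤ) :
    f r = f 0 := by
  set K := 2 * f 0 - f 1 - f (0 - 1)
  set g : ℤ → R := fun r => f (r + 1) - f r
  have hgper : Function.Periodic g ℓ := fun r => by
    simp only [g]
    rw [add_right_comm, hper, hper]
  have hgstep : ∀ r, g (r + 1) = g r + -K := fun r => by
    have := h (r + 1)
    rw [add_sub_cancel_right] at this
    linear_combination -this
  have hK : -K = 0 := hgper.eq_zero_of_forall_add_one_eq_add hℓ hgstep
  have hg : ∀ r, g r = g 0 := fun r => by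
    simpa [hK] using eq_add_mul_of_forall_add_one_eq_add hgstep r
  have hfstep : ∀ r, f (r + 1) = f r + g 0 := fun r => by
    rw [← hg r]
    ring
  have hg0 : g 0 = 0 := hper.eq_zero_of_forall_add_one_eq_add hℓ hfstep
  simpa [hg0] using eq_add_mul_of_forall_add_one_eq_add hfstep r

end Periodic

noncomputable def casoratian (P : ℤ → R[X]) (r : ℤ) : R[X] :=
  P r ^ 2 - taylor 1 (P (r + 1)) * taylor (-1) (P (r - 1))

theorem isConstituent_casoratian {f : ℤ → R} {L : ℤ} {P : ℤ → R[X]}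
    (h : ∀ r, IsConstituent f L r (P r)) (r : ℤ) :
    IsConstituent (fun m => f m ^ 2 - f (m + 1) * f (m - 1)) L r (casoratian P r) := by
  have hplus := (h (r + 1)).comp_add 1
  have hminus := (h (r + -1)).comp_add (-1)
  push_cast at hplus hminus
  simp only [← sub_eq_add_neg] at hminus
  exact ((h r).pow 2).sub (hplus.mul hminus)

section Casoratian

variable {P : ℤ → R[X]} {n : ℕ} {c : R}

theorem natDegree_casoratian_le (hdeg : ∀ r, (P r).natDegree ≤ n + 1)
    (hc : ∀ r, (P r).coeff (n + 1) = c) (r : ℤ) :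
    (casoratian P r).natDegree ≤ 2 * n + 1 := by
  have hT : ∀ s (t : R), (taylor t (P s)).natDegree ≤ n + 1 := fun s t =>
    (natDegree_taylor _ _).trans_le (hdeg s)
  have hle : (casoratian P r).natDegree ≤ (n + 1) + (n + 1) := by
    rw [casoratian, sq]
    exact (natDegree_sub_le_of_le (natDegree_mul_le_of_le (hdeg r) (hdeg r))
      (natDegree_mul_le_of_le (hT _ _) (hT _ _))).trans_eq (max_self _)
  have htop : (casoratian P r).coeff ((n + 1) + (n + 1)) = 0 := by
    simp only [casoratian, coeff_sub, sq, coeff_mul_add_eq_of_natDegree_le (hdeg r) (hdeg r),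
      coeff_mul_add_eq_of_natDegree_le (hT _ _) (hT _ _),
      taylor_coeff_of_natDegree_le _ (hdeg _), hc, sub_self]
  have := natDegree_le_pred hle htop
  omega

theorem casoratian_coeff_two_mul_add_one (hdeg : ∀ r, (P r).natDegree ≤ n + 1)
    (hc : ∀ r, (P r).coeff (n + 1) = c) (r : ℤ) :
    (casoratian P r).coeff (2 * n + 1) =
      c * (2 * (P r).coeff n - (P (r + 1)).coeff n - (P (r - 1)).coeff n) := by
  have hT : ∀ s (t : R), (taylor t (P s)).natDegree ≤ n + 1 := fun s t =>
    (natDegree_taylor _ _).trans_le (hdeg s)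
  simp only [casoratian, coeff_sub, sq, coeff_mul_of_natDegree_le_succ (hdeg r) (hdeg r),
    coeff_mul_of_natDegree_le_succ (hT _ _) (hT _ _), taylor_coeff_of_natDegree_le _ (hdeg _),
    taylor_coeff_of_natDegree_le_succ _ (hdeg _), hc]
  ring

theorem casoratian_coeff_two_mul_add_two {b : R} (hdeg : ∀ r, (P r).natDegree ≤ n + 2)
    (hc : ∀ r, (P r).coeff (n + 2) = c) (hb : ∀ r, (P r).coeff (n + 1) = b) (r : ℤ) :
    (casoratian P r).coeff (2 * n + 2) =
      c * (2 * (P r).coeff n - (P (r + 1)).coeff n - (P (r - 1)).coeff n) + (n + 2) * c ^ 2 := by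
  have hT : ∀ s (t : R), (taylor t (P s)).natDegree ≤ n + 2 := fun s t =>
    (natDegree_taylor _ _).trans_le (hdeg s)
  have hchoose : ((n + 2).choose 2 : R) * 2 = (n + 2) * (n + 1) := by
    have : (n + 2).choose 2 * 2 = (n + 2) * (n + 1) := by
      rw [Nat.choose_two_right, Nat.div_mul_cancel (Nat.even_mul_pred_self _).two_dvd]
      rfl
    exact_mod_cast congrArg (Nat.cast (R := R)) this
  simp only [casoratian, coeff_sub, sq, coeff_mul_of_natDegree_le_add_two (hdeg r) (hdeg r),
    coeff_mul_of_natDegree_le_add_two (hT _ _) (hT _ _), taylor_coeff_of_natDegree_le _ (hdeg _),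
    taylor_coeff_of_natDegree_le_succ _ (hdeg _), taylor_coeff_of_natDegree_le_add_two _ (hdeg _),
    hc, hb]
  push_cast
  linear_combination (-c ^ 2) * hchoose

end Casoratian

def HasConstLeadingTerm {ι : Type*} (A : ι → R[X]) : Prop :=
  ∀ r s, (A r).natDegree = (A s).natDegree ∧ (A r).leadingCoeff = (A s).leadingCoeff

namespace HasConstLeadingTerm

variable {ι : Type*} {A B : ι → R[X]}

theorem coeff_eq (h : HasConstLeadingTerm A) {N : ℕ} {s : ι} (hN : (A s).natDegree ≤ N) (r : ι) :
    (A r).coeff N = (A s).coeff N := by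
  obtain ⟨hdeg, hlc⟩ := h r s
  rcases hN.eq_or_lt with rfl | hN
  · rw [coeff_natDegree, ← hdeg, coeff_natDegree, hlc]
  · rw [coeff_eq_zero_of_natDegree_lt hN, coeff_eq_zero_of_natDegree_lt (hdeg ▸ hN)]

variable [NoZeroDivisors R]

theorem mul (hA : HasConstLeadingTerm A) (hB : HasConstLeadingTerm B) :
    HasConstLeadingTerm (A * B) := fun r s => by
  have hzero : ∀ {F : ι → R[X]}, HasConstLeadingTerm F → (F r = 0 ↔ F s = 0) := fun hF => by
    rw [← leadingCoeff_eq_zero, (hF r s).2, leadingCoeff_eq_zero]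
  simp only [Pi.mul_apply, leadingCoeff_mul, (hA r s).2, (hB r s).2, and_true]
  by_cases hA0 : A s = 0
  · simp [hA0, (hzero hA).2 hA0]
  by_cases hB0 : B s = 0
  · simp [hB0, (hzero hB).2 hB0]
  rw [natDegree_mul (mt (hzero hA).1 hA0) (mt (hzero hB).1 hB0), natDegree_mul hA0 hB0,
    (hA r s).1, (hB r s).1]

theorem prod {κ : Type*} (t : Finset κ) {F : κ → ι → R[X]}
    (h : ∀ i ∈ t, HasConstLeadingTerm (F i)) :
    HasConstLeadingTerm fun r => ∏ i ∈ t, F i r := by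
  rw [← Finset.prod_fn]
  exact Finset.prod_induction _ _ (fun _ _ => mul) (fun _ _ => by simp) h

end HasConstLeadingTerm

section Rigidity

variable [IsDomain R] [CharZero R] {P : ℤ → R[X]} {ℓ : ℤ} {n : ℕ} {c : R}

theorem coeff_eq_of_casoratian_of_natDegree_le_succ (hℓ : ℓ ≠ 0) (hper : Function.Periodic P ℓ)
    (hc0 : c ≠ 0) (hdeg : ∀ r, (P r).natDegree ≤ n + 1) (hc : ∀ r, (P r).coeff (n + 1) = c)
    (hcas : HasConstLeadingTerm (casoratian P)) (r : ℤ) :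
    (P r).coeff n = (P 0).coeff n := by
  refine (hper.comp (coeff · n)).eq_of_second_difference_eq hℓ (fun r => mul_left_cancel₀ hc0 ?_) r
  have := hcas.coeff_eq (natDegree_casoratian_le hdeg hc 0) r
  rwa [casoratian_coeff_two_mul_add_one hdeg hc, casoratian_coeff_two_mul_add_one hdeg hc,
    zero_add] at this

theorem coeff_eq_of_casoratian_of_natDegree_le_add_two (hℓ : ℓ ≠ 0)
    (hper : Function.Periodic P ℓ) (hc0 : c ≠ 0) (hdeg : ∀ r, (P r).natDegree ≤ n + 2)
    (hc : ∀ r, (P r).coeff (n + 2) = c) (hcas : HasConstLeadingTerm (casoratian P)) (r : ℤ) :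
    (P r).coeff n = (P 0).coeff n := by
  have hb := coeff_eq_of_casoratian_of_natDegree_le_succ hℓ hper hc0 hdeg hc hcas
  have hdeg0 : (casoratian P 0).natDegree ≤ 2 * n + 2 := by
    have := natDegree_le_pred (natDegree_casoratian_le hdeg hc 0)
      (by rw [casoratian_coeff_two_mul_add_one hdeg hc, hb (0 + 1), hb (0 - 1)]; ring)
    omega
  refine (hper.comp (coeff · n)).eq_of_second_difference_eq hℓ
    (fun r => mul_left_cancel₀ hc0 (add_right_cancel (b := (n + 2) * c ^ 2) ?_)) r
  have := hcas.coeff_eq hdeg0 r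
  rwa [casoratian_coeff_two_mul_add_two hdeg hc hb, casoratian_coeff_two_mul_add_two hdeg hc hb,
    zero_add] at this

theorem coeff_sub_one_eq_and_coeff_sub_two_eq_of_casoratian {e : ℕ} (he : 1 ≤ e) (hℓ : ℓ ≠ 0)
    (hper : Function.Periodic P ℓ) (hc0 : c ≠ 0) (hdeg : ∀ r, (P r).natDegree ≤ e)
    (hc : ∀ r, (P r).coeff e = c) (hcas : HasConstLeadingTerm (casoratian P)) (r s : ℤ) :
    (P r).coeff (e - 1) = (P s).coeff (e - 1) ∧ (P r).coeff (e - 2) = (P s).coeff (e - 2) := by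
  obtain ⟨n, rfl⟩ : ∃ n, e = n + 1 := ⟨e - 1, by omega⟩
  have h1 := coeff_eq_of_casoratian_of_natDegree_le_succ hℓ hper hc0 hdeg hc hcas
  refine ⟨by simp only [add_tsub_cancel_right, h1 r, h1 s], ?_⟩
  rcases n with _ | n
  · simp only [zero_add, h1 r, h1 s]
  · have h2 := coeff_eq_of_casoratian_of_natDegree_le_add_two hℓ hper hc0 hdeg hc hcas
    simp only [add_assoc, Nat.reduceAdd, add_tsub_cancel_right, h2 r, h2 s]

end Rigidity

theorem constituent_eq_of_forall_eq_eval_emod [IsDomain R] [CharZero R] {f : ℤ → R}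
    {ℓ ℓ' : ℤ} {p p' : ℤ → R[X]} (hℓ : ℓ ≠ 0) (hℓ' : ℓ' ≠ 0)
    (hp : ∀ m, f m = (p (m % ℓ)).eval (m : R)) (hp' : ∀ m, f m = (p' (m % ℓ')).eval (m : R))
    (r : ℤ) : p (r % ℓ) = p' (r % ℓ') :=
  (IsConstituent.of_forall_eq_eval_emod hp (dvd_mul_right ℓ ℓ') r).eq (mul_ne_zero hℓ hℓ')
    (IsConstituent.of_forall_eq_eval_emod hp' (dvd_mul_left ℓ' ℓ) r)

section FloorDivision

variable {K : Type*} [Field K] [CharZero K]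

/- As `m` runs through `r + Lℤ`, `⌊(β m - k) / α⌋` runs through the progression of step `β L / α`
starting at `⌊(β r - k) / α⌋`, i.e. it is an affine function of `m` of slope `β / α`. -/
noncomputable def fdivConstituent (p : ℤ → K[X]) (ℓ α β k r : ℤ) : K[X] :=
  (p (Int.fdiv (β * r - k) α % ℓ)).comp
    (C ((β : K) / α) * X + C ((Int.fdiv (β * r - k) α : K) - β / α * r))

theorem isConstituent_fdivConstituent {g : ℤ → K} {p : ℤ → K[X]} {ℓ α β L : ℤ}
    (hg : ∀ m, g m = (p (m % ℓ)).eval (m : K)) (hα : α ≠ 0) (hdvd : α * ℓ ∣ β * L) (k r : ℤ) :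
    IsConstituent (fun m => g (Int.fdiv (β * m - k) α)) L r (fdivConstituent p ℓ α β k r) := by
  obtain ⟨u, hu⟩ := hdvd
  refine IsConstituent.comp_fdiv (S := ℓ * u) hα (by rw [← mul_assoc, hu]) ?_
    (IsConstituent.of_forall_eq_eval_emod hg (dvd_mul_right ℓ u) _)
  rw [div_mul_eq_mul_div, div_eq_iff (by exact_mod_cast hα)]
  exact_mod_cast hu.trans (by ring)

theorem hasConstLeadingTerm_fdivConstituent {p : ℤ → K[X]} {ℓ α β : ℤ} {d : ℕ} {a : K}
    (hℓ : 0 < ℓ) (hp : ∀ j, 0 ≤ j → j < ℓ → (p j).natDegree = d ∧ (p j).coeff d = a)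
    (hα : α ≠ 0) (hβ : β ≠ 0) (k : ℤ) :
    HasConstLeadingTerm (fdivConstituent p ℓ α β k) := by
  have hγ : (β : K) / α ≠ 0 := div_ne_zero (by exact_mod_cast hβ) (by exact_mod_cast hα)
  have key : ∀ r, (fdivConstituent p ℓ α β k r).natDegree = d ∧
      (fdivConstituent p ℓ α β k r).leadingCoeff = a * (β / α) ^ d := fun r => by
    obtain ⟨hd, ha⟩ := hp _ (Int.emod_nonneg _ hℓ.ne') (Int.emod_lt_of_pos _ hℓ)
    rw [fdivConstituent, natDegree_comp, natDegree_linear hγ,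
      leadingCoeff_comp (by rw [natDegree_linear hγ]; exact one_ne_zero), leadingCoeff_linear hγ,
      leadingCoeff, hd, ha, mul_one]
    exact ⟨rfl, rfl⟩
  exact fun r s => ⟨(key r).1.trans (key s).1.symm, (key r).2.trans (key s).2.symm⟩

theorem hasConstLeadingTerm_casoratian_of_sq_sub_eq_prod {ι : Type*} {s : Finset ι}
    {α β : ι → ℤ} {κ : ι → ℕ} {f : ℤ → K} {g : ι → ℤ → K} {ℓ : ℤ} {p : ℤ → K[X]}
    {ℓg : ι → ℤ} {pg : ι → ℤ → K[X]} {d : ι → ℕ} {a : ι → K}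
    (hα : ∀ b ∈ s, α b ≠ 0) (hβ : ∀ b ∈ s, β b ≠ 0) (hℓ : ℓ ≠ 0)
    (hf : ∀ m, f m = (p (m % ℓ)).eval (m : K)) (hℓg : ∀ b, 0 < ℓg b)
    (hpg : ∀ b, ∀ j, 0 ≤ j → j < ℓg b → (pg b j).natDegree = d b ∧ (pg b j).coeff (d b) = a b)
    (hg : ∀ b m, g b m = (pg b (m % ℓg b)).eval (m : K))
    (hfg : ∀ m, f m ^ 2 - f (m + 1) * f (m - 1) =
      ∏ b ∈ s, ∏ k ∈ Finset.range (κ b), g b (Int.fdiv (β b * m - k) (α b))) :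
    HasConstLeadingTerm (casoratian fun r => p (r % ℓ)) := by
  obtain ⟨L, hL0, hℓL, hsL⟩ : ∃ L : ℤ, L ≠ 0 ∧ ℓ ∣ L ∧ ∀ b ∈ s, α b * ℓg b ∣ L :=
    ⟨ℓ * ∏ b ∈ s, α b * ℓg b,
      mul_ne_zero hℓ (Finset.prod_ne_zero_iff.2 fun b hb => mul_ne_zero (hα b hb) (hℓg b).ne'),
      dvd_mul_right _ _, fun b hb => (Finset.dvd_prod_of_mem _ hb).mul_left _⟩
  have hcas : casoratian (fun r => p (r % ℓ)) = fun r => ∏ b ∈ s, ∏ k ∈ Finset.range (κ b),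
      fdivConstituent (pg b) (ℓg b) (α b) (β b) k r := funext fun r =>
    (isConstituent_casoratian (IsConstituent.of_forall_eq_eval_emod hf hℓL) r).eq hL0 <| by
      simp only [hfg]
      exact IsConstituent.prod _ fun b hb => IsConstituent.prod _ fun k _ =>
        isConstituent_fdivConstituent (hg b) (hα b hb) (dvd_mul_of_dvd_right (hsL b hb) _) k r
  rw [hcas]
  exact HasConstLeadingTerm.prod _ fun b hb => HasConstLeadingTerm.prod _ fun k _ =>
    hasConstLeadingTerm_fdivConstituent (hℓg b) (hpg b) (hα b hb) (hβ b hb) k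

end FloorDivision

end

theorem stmt_12_general {I : Type*} [Fintype I]
    (C : I → I → ℤ)
    (hsymzero : ∀ a b, (C a b < 0 ↔ C b a < 0))
    (q : I → ℤ → ℝ) (e : I → ℕ) (c : I → ℝ)
    (he : ∀ a, 1 ≤ e a) (hc : ∀ a, 0 < c a)
    (hqp : ∀ a, ∃ ℓ : ℕ, 1 ≤ ℓ ∧ ∃ p : ℤ → Polynomial ℝ,
      (∀ j : ℤ, 0 ≤ j → j < (ℓ : ℤ) →
        (p j).natDegree = e a ∧ (p j).coeff (e a) = c a) ∧
      (∀ m : ℤ, q a m = (p (m % (ℓ : ℤ))).eval (m : ℝ)))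
    (hQ : ∀ a, ∀ m : ℤ,
      q a m ^ 2 - q a (m + 1) * q a (m - 1) =
        ∏ b ∈ Finset.univ.filter (fun b => C a b < 0),
          ∏ k ∈ Finset.range (-(C a b)).toNat,
            q b (Int.fdiv (C b a * m - (k : ℤ)) (C a b))) :
    ∀ a : I, ∀ ℓ : ℕ, 1 ≤ ℓ → ∀ p : ℤ → Polynomial ℝ,
      (∀ j : ℤ, 0 ≤ j → j < (ℓ : ℤ) → (p j).natDegree = e a) →
      (∀ m : ℤ, q a m = (p (m % (ℓ : ℤ))).eval (m : ℝ)) →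
      ∀ i j : ℤ, 0 ≤ i → i < (ℓ : ℤ) → 0 ≤ j → j < (ℓ : ℤ) →
        (p i).coeff (e a - 1) = (p j).coeff (e a - 1) ∧
        (p i).coeff (e a - 2) = (p j).coeff (e a - 2) := by
  intro a ℓ hℓ p hdeg hrep i j hi0 hiℓ hj0 hjℓ
  choose ℓq hℓq pq hpq hqrep using hqp
  have hℓ0 : (ℓ : ℤ) ≠ 0 := by omega
  have hℓq0 : ∀ b, (0 : ℤ) < ℓq b := fun b => by have := hℓq b; omega
  set P : ℤ → ℝ[X] := fun r => p (r % ℓ)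
  have hlead : ∀ r, (P r).coeff (e a) = c a := fun r => by
    show (p (r % ℓ)).coeff (e a) = c a
    rw [constituent_eq_of_forall_eq_eval_emod hℓ0 (hℓq0 a).ne' hrep (hqrep a) r]
    exact (hpq a _ (Int.emod_nonneg _ (hℓq0 a).ne') (Int.emod_lt_of_pos _ (hℓq0 a))).2
  have hneighbour : ∀ b ∈ Finset.univ.filter (fun b => C a b < 0), C a b < 0 :=
    fun b hb => (Finset.mem_filter.1 hb).2
  have hcas := hasConstLeadingTerm_casoratian_of_sq_sub_eq_prod
    (fun b hb => (hneighbour b hb).ne) (fun b hb => ((hsymzero a b).1 (hneighbour b hb)).ne)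
    hℓ0 hrep hℓq0 hpq hqrep (hQ a)
  have key := coeff_sub_one_eq_and_coeff_sub_two_eq_of_casoratian (P := P) (he a) hℓ0
    (fun r => congrArg p (Int.add_emod_right ..)) (hc a).ne'
    (fun r => (hdeg _ (Int.emod_nonneg _ hℓ0) (Int.emod_lt_of_pos _ (by omega))).le)
    hlead hcas i j
  simpa only [P, Int.emod_eq_of_lt hi0 hiℓ, Int.emod_eq_of_lt hj0 hjℓ] using key

/-- Next-to-leading coefficients of a quasipolynomial solution of the Q-system.  `C` is a generalized Cartan
matrix on a finite set `I`; `(q a)` is a family of quasipolynomials (each given piecewise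
by polynomial constituents of degree `e a` with constant leading coefficient `c a > 0`)
satisfying the Q-system.  Then in any representation of `q a` by constituent
polynomials of degree `e a`, all constituents share the same coefficient in degrees
`e a − 1` and `e a − 2`: the next two leading coefficients are independent of `m`. -/
theorem stmt_12 {I : Type*} [Fintype I] [DecidableEq I]
    (C : I → I → ℤ)
    (hdiag : ∀ a, C a a = 2)
    (hoff : ∀ a b, a ≠ b → C a b ≤ 0)
    (hsymzero : ∀ a b, (C a b < 0 ↔ C b a < 0))
    (q : I → ℤ → ℝ) (e : I → ℕ) (c : I → ℝ)
    (he : ∀ a, 1 ≤ e a) (hc : ∀ a, 0 < c a)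
    (hqp : ∀ a, ∃ ℓ : ℕ, 1 ≤ ℓ ∧ ∃ p : ℤ → Polynomial ℝ,
      (∀ j : ℤ, 0 ≤ j → j < (ℓ : ℤ) →
        (p j).natDegree = e a ∧ (p j).coeff (e a) = c a) ∧
      (∀ m : ℤ, q a m = (p (m % (ℓ : ℤ))).eval (m : ℝ)))
    (hQ : ∀ a, ∀ m : ℤ,
      q a m ^ 2 - q a (m + 1) * q a (m - 1) =
        ∏ b ∈ Finset.univ.filter (fun b => C a b < 0),
          ∏ k ∈ Finset.range (-(C a b)).toNat,
            q b (Int.fdiv (C b a * m - (k : ℤ)) (C a b))) :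
    ∀ a : I, ∀ ℓ : ℕ, 1 ≤ ℓ → ∀ p : ℤ → Polynomial ℝ,
      (∀ j : ℤ, 0 ≤ j → j < (ℓ : ℤ) → (p j).natDegree = e a) →
      (∀ m : ℤ, q a m = (p (m % (ℓ : ℤ))).eval (m : ℝ)) →
      ∀ i j : ℤ, 0 ≤ i → i < (ℓ : ℤ) → 0 ≤ j → j < (ℓ : ℤ) →
        (p i).coeff (e a - 1) = (p j).coeff (e a - 1) ∧
        (p i).coeff (e a - 2) = (p j).coeff (e a - 2) :=
  stmt_12_general C hsymzero q e c he hc hqp hQ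
end

section
/- Let d ≥ 1 be an integer and let p_0, p_1 be real polynomials of degree at most d whose coefficients of x^d are C_0 and C_1 respectively, with C_0 ≥ 0 and C_1 ≥ 0. Define p : ℤ → ℝ by p(m) = p_0(m) for m even and p(m) = p_1(m) for m odd. If there exists N ∈ ℤ such that p(m)² − p(m−1)·p(m+1) > 0 for all m ≥ N, then C_0 = C_1. -/
/-!
At an even `m` the quantity `p(m)² − p(m−1)p(m+1)` is the value at `m` of the polynomial
`p₀(x)² − p₁(x−1)p₁(x+1)`, of degree at most `2d` with `x^{2d}`-coefficient `C₀² − C₁²`.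
Since `C₀, C₁ ≥ 0`, if `C₀ < C₁` this coefficient is negative, so the polynomial is eventually
negative, contradicting positivity at large even integers. Odd integers exclude `C₁ < C₀` in the same way.
-/

open Polynomial Filter

namespace Polynomial

theorem coeff_taylor_of_natDegree_le {R : Type*} [CommSemiring R] {f : R[X]} {n : ℕ} (r : R)
    (h : f.natDegree ≤ n) : (taylor r f).coeff n = f.coeff n := by
  rcases h.lt_or_eq with h | rfl
  · rw [coeff_eq_zero_of_natDegree_lt h, coeff_eq_zero_of_natDegree_lt (by rwa [natDegree_taylor])]
  · rw [← leadingCoeff, ← leadingCoeff_taylor (r := r), leadingCoeff, natDegree_taylor]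

theorem eventually_eval_neg_of_coeff_neg {P : ℝ[X]} {n : ℕ} (hdeg : P.natDegree ≤ n)
    (hn : P.coeff n < 0) : ∀ᶠ x in atTop, P.eval x < 0 := by
  have hlc : P.leadingCoeff < 0 := by
    rwa [leadingCoeff, natDegree_eq_of_le_of_coeff_ne_zero hdeg hn.ne]
  exact (isEquivalent_atTop_lead P).eventually_neg <|
    (eventually_gt_atTop 0).mono fun x hx => mul_neg_of_neg_of_pos hlc (pow_pos hx _)

end Polynomial

theorem sq_coeff_le_of_frequently_pos {d : ℕ} {a b : ℝ[X]} (ha : a.natDegree ≤ d)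
    (hb : b.natDegree ≤ d)
    (h : ∃ᶠ x in atTop, 0 < a.eval x ^ 2 - b.eval (x - 1) * b.eval (x + 1)) :
    b.coeff d ^ 2 ≤ a.coeff d ^ 2 := by
  set q := a * a - taylor (-1) b * taylor 1 b with hq
  have hq_eval (x : ℝ) : q.eval x = a.eval x ^ 2 - b.eval (x - 1) * b.eval (x + 1) := by
    simp only [hq, eval_sub, eval_mul, taylor_eval, ← sub_eq_add_neg, sq]
  have hb' (r : ℝ) : (taylor r b).natDegree ≤ d := (natDegree_taylor b r).le.trans hb
  have hq_deg : q.natDegree ≤ d + d :=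
    (natDegree_sub_le _ _).trans <|
      max_le (natDegree_mul_le_of_le ha ha) (natDegree_mul_le_of_le (hb' _) (hb' _))
  have hq_coeff : q.coeff (d + d) = a.coeff d ^ 2 - b.coeff d ^ 2 := by
    rw [coeff_sub, coeff_mul_add_eq_of_natDegree_le ha ha,
      coeff_mul_add_eq_of_natDegree_le (hb' _) (hb' _), coeff_taylor_of_natDegree_le _ hb,
      coeff_taylor_of_natDegree_le _ hb, sq, sq]
  by_contra! hlt
  have hneg := eventually_eval_neg_of_coeff_neg hq_deg (by rw [hq_coeff]; linarith)
  exact h (hneg.mono fun x hx => by rw [hq_eval] at hx; linarith)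

theorem frequently_pos_of_parity (p : ℤ → ℝ) (a b : ℝ[X]) (r : ℤ)
    (hp : ∀ m : ℤ, p m = if Even (m + r) then a.eval (m : ℝ) else b.eval (m : ℝ))
    (hpos : ∀ᶠ m in atTop, 0 < p m ^ 2 - p (m - 1) * p (m + 1)) :
    ∃ᶠ x in atTop, 0 < a.eval x ^ 2 - b.eval (x - 1) * b.eval (x + 1) := by
  have hp_even (m : ℤ) (hm : Even (m + r)) : p m ^ 2 - p (m - 1) * p (m + 1) =
      a.eval (m : ℝ) ^ 2 - b.eval ((m : ℝ) - 1) * b.eval ((m : ℝ) + 1) := by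
    have h₁ : ¬Even (m - 1 + r) := by
      rw [show m - 1 + r = m + r - 1 by ring, Int.even_sub_one, not_not]; exact hm
    have h₂ : ¬Even (m + 1 + r) := by
      rw [show m + 1 + r = m + r + 1 by ring, Int.even_add_one, not_not]; exact hm
    rw [hp, hp, hp, if_pos hm, if_neg h₁, if_neg h₂]
    push_cast
    rfl
  have hseq : Tendsto (fun t : ℤ => 2 * t + r) atTop atTop :=
    tendsto_atTop_atTop.2 fun c => ⟨max (c - r) 0, fun t ht => by omega⟩
  refine (tendsto_intCast_atTop_atTop.comp hseq).frequently
    ((hseq.eventually hpos).frequently.mono fun t ht => ?_)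
  rwa [hp_even _ ⟨t + r, by ring⟩] at ht

theorem stmt_13_general (d : ℕ) (p0 p1 : Polynomial ℝ)
    (h0 : p0.degree ≤ (d : ℕ)) (h1 : p1.degree ≤ (d : ℕ))
    (hC0 : 0 ≤ p0.coeff d) (hC1 : 0 ≤ p1.coeff d)
    (p : ℤ → ℝ)
    (hp : ∀ m : ℤ, p m = if Even m then p0.eval (m : ℝ) else p1.eval (m : ℝ))
    (N : ℤ) (hpos : ∀ m : ℤ, N ≤ m → 0 < p m ^ 2 - p (m - 1) * p (m + 1)) :
    p0.coeff d = p1.coeff d := by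
  have hpos' : ∀ᶠ m in atTop, 0 < p m ^ 2 - p (m - 1) * p (m + 1) := eventually_atTop.2 ⟨N, hpos⟩
  have hp_odd (m : ℤ) : p m = if Even (m + 1) then p1.eval (m : ℝ) else p0.eval (m : ℝ) := by
    simp only [hp, Int.even_add_one, ite_not]
  have h10 := sq_coeff_le_of_frequently_pos (natDegree_le_of_degree_le h0)
    (natDegree_le_of_degree_le h1) (frequently_pos_of_parity p p0 p1 0 (by simpa using hp) hpos')
  have h01 := sq_coeff_le_of_frequently_pos (natDegree_le_of_degree_le h1)
    (natDegree_le_of_degree_le h0) (frequently_pos_of_parity p p1 p0 1 hp_odd hpos')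
  exact (pow_left_inj₀ hC0 hC1 two_ne_zero).1 (le_antisymm h01 h10)

/-- Let `p` be the real quasipolynomial of period 2 given by polynomials `p0` (on even
integers) and `p1` (on odd integers), both of degree at most `d ≥ 1`, with nonnegative
coefficients `C0 = p0.coeff d`, `C1 = p1.coeff d` of `x^d`.  If
`p(m)² − p(m−1)·p(m+1) > 0` for all sufficiently large `m`, then `C0 = C1`. -/
theorem stmt_13 (d : ℕ) (hd : 1 ≤ d) (p0 p1 : Polynomial ℝ)
    (h0 : p0.degree ≤ (d : ℕ)) (h1 : p1.degree ≤ (d : ℕ))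
    (hC0 : 0 ≤ p0.coeff d) (hC1 : 0 ≤ p1.coeff d)
    (p : ℤ → ℝ)
    (hp : ∀ m : ℤ, p m = if Even m then p0.eval (m : ℝ) else p1.eval (m : ℝ))
    (N : ℤ) (hpos : ∀ m : ℤ, N ≤ m → 0 < p m ^ 2 - p (m - 1) * p (m + 1)) :
    p0.coeff d = p1.coeff d :=
  stmt_13_general d p0 p1 h0 h1 hC0 hC1 p hp N hpos
end

section
/- Define the following polynomials with rational coefficients: q1(m) = m⁶/40 + 3m⁵/10 + 35m⁴/24 + 11m³/3 + 301m²/60 + 53m/15 + 1; Q0(m) = 3m¹⁰/800 + 3m⁹/40 + 211m⁸/320 + 67m⁷/20 + 39133m⁶/3600 + 1409m⁵/60 + 98231m⁴/2880 + 1311m³/40 + 71491m²/3600 + 409m/60 + 1; Q1(m) = 3m¹⁰/800 + 7m⁹/80 + 289m⁸/320 + 217m⁷/40 + 75523m⁶/3600 + 6539m⁵/120 + 276809m⁴/2880 + 27223m³/240 + 307801m²/3600 + 556m/15 + 7; Q2(m) = 3m¹⁰/800 + m⁹/10 + 379m⁸/320 + 41m⁷/5 + 132223m⁶/3600 + 6667m⁵/60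 + 661559m⁴/2880 + 9599m³/30 + 1032751m²/3600 + 8947m/60 + 34. Then the following four identities hold in the polynomial ring ℚ[m]: (1) q1(m)² − q1(m−1)·q1(m+1) = Q0(m); (2) Q0(m)² − Q2(m−1)·Q1(m) = q1(m)³; (3) Q1(m)² − Q0(m)·Q2(m) = q1(m)²·q1(m+1); (4) Q2(m)² − Q1(m)·Q0(m+1) = q1(m)·q1(m+1)². -/
open Polynomial

/-- `q1(m) = m⁶/40 + 3m⁵/10 + 35m⁴/24 + 11m³/3 + 301m²/60 + 53m/15 + 1` in `ℚ[m]`. -/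
noncomputable def q1G2 : Polynomial ℚ :=
  C (1/40) * X ^ 6 + C (3/10) * X ^ 5 + C (35/24) * X ^ 4 + C (11/3) * X ^ 3 +
    C (301/60) * X ^ 2 + C (53/15) * X + 1

/-- `Q0(m) = q2(3m)` in `ℚ[m]`. -/
noncomputable def Q0G2 : Polynomial ℚ :=
  C (3/800) * X ^ 10 + C (3/40) * X ^ 9 + C (211/320) * X ^ 8 + C (67/20) * X ^ 7 +
    C (39133/3600) * X ^ 6 + C (1409/60) * X ^ 5 + C (98231/2880) * X ^ 4 +
    C (1311/40) * X ^ 3 + C (71491/3600) * X ^ 2 + C (409/60) * X + 1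

/-- `Q1(m) = q2(3m+1)` in `ℚ[m]`. -/
noncomputable def Q1G2 : Polynomial ℚ :=
  C (3/800) * X ^ 10 + C (7/80) * X ^ 9 + C (289/320) * X ^ 8 + C (217/40) * X ^ 7 +
    C (75523/3600) * X ^ 6 + C (6539/120) * X ^ 5 + C (276809/2880) * X ^ 4 +
    C (27223/240) * X ^ 3 + C (307801/3600) * X ^ 2 + C (556/15) * X + 7

/-- `Q2(m) = q2(3m+2)` in `ℚ[m]`. -/
noncomputable def Q2G2 : Polynomial ℚ :=
  C (3/800) * X ^ 10 + C (1/10) * X ^ 9 + C (379/320) * X ^ 8 + C (41/5) * X ^ 7 +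
    C (132223/3600) * X ^ 6 + C (6667/60) * X ^ 5 + C (661559/2880) * X ^ 4 +
    C (9599/30) * X ^ 3 + C (1032751/3600) * X ^ 2 + C (8947/60) * X + C 34

set_option maxHeartbeats 1000000 in
/-- The dimension quasipolynomials of the Kirillov–Reshetikhin modules of type `G₂`
satisfy the `Q`-system of type `G₂`: four polynomial identities in `ℚ[m]`, where
composing with `X ± 1` corresponds to substituting `m ± 1` for `m`. -/
theorem stmt_14 :
    q1G2 ^ 2 - q1G2.comp (X - 1) * q1G2.comp (X + 1) = Q0G2 ∧
    Q0G2 ^ 2 - Q2G2.comp (X - 1) * Q1G2 = q1G2 ^ 3 ∧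
    Q1G2 ^ 2 - Q0G2 * Q2G2 = q1G2 ^ 2 * q1G2.comp (X + 1) ∧
    Q2G2 ^ 2 - Q1G2 * Q0G2.comp (X + 1) = q1G2 * q1G2.comp (X + 1) ^ 2 := by
  refine ⟨?_, ?_, ?_, ?_⟩ <;>
  · apply Polynomial.funext
    intro x
    simp only [q1G2, Q0G2, Q1G2, Q2G2, eval_add, eval_sub, eval_mul, eval_pow, eval_comp,
      eval_C, eval_X, eval_one, eval_ofNat]
    ring
end

section
/- Let t ≥ 1, e ≥ 0 and h∨ ≥ 1 be integers with c := t·(e + 1 − h∨) ≥ 0. Let h : ℤ → ℚ satisfy h(j) = 0 unless 0 ≤ j ≤ c, and suppose h is symmetric: h(j) = h(c − j) for all 0 ≤ j ≤ c. For x ∈ ℤ and e ∈ ℕ write binom(x, e) := (Π_{i=0}^{e−1} (x − i)) / e! ∈ ℚ. Define q : ℤ → ℚ by q(m) = Σ_{j : 0 ≤ j ≤ c, j ≡ m (mod t)} binom(e + (m − j)/t, e) · h(j). Then for every m ∈ ℤ, q(−m) = (−1)^e · q(m − t·h∨). -/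
/-- The polynomial binomial coefficient `binom(x, e) = x(x−1)⋯(x−e+1)/e! ∈ ℚ`
for `x : ℤ` and `e : ℕ`. -/
def binomQ (x : ℤ) (e : ℕ) : ℚ :=
  (∏ i ∈ Finset.range e, ((x : ℚ) - (i : ℚ))) / (Nat.factorial e : ℚ)

lemma binomQ_reflect (x : ℤ) (e : ℕ) :
    binomQ x e = (-1 : ℚ)^e * binomQ ((e : ℤ) - 1 - x) e := by
  unfold binomQ
  rw [← mul_div_assoc]
  congr 1
  have key : (-1:ℚ)^e * ∏ i ∈ Finset.range e, ((((e:ℤ) - 1 - x : ℤ) : ℚ) - (i:ℚ))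
      = ∏ i ∈ Finset.range e, (-1) * ((((e:ℤ) - 1 - x : ℤ) : ℚ) - (i:ℚ)) := by
    rw [Finset.prod_mul_distrib, Finset.prod_const, Finset.card_range]
  rw [key, ← Finset.prod_range_reflect (fun i => (x : ℚ) - (i : ℚ)) e]
  apply Finset.prod_congr rfl
  intro i hi
  rw [Finset.mem_range] at hi
  have : ((e - 1 - i : ℕ) : ℚ) = (e : ℚ) - 1 - i := by
    push_cast [Nat.cast_sub (by omega : i ≤ e - 1), Nat.cast_sub (by omega : 1 ≤ e)]
    ring
  simp only [this]
  push_cast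
  ring

/-- Reciprocity for quasipolynomials with a symmetric `h`-vector.  Let `t ≥ 1`,
`e ≥ 0`, `h∨ ≥ 1` with `c = t(e + 1 − h∨) ≥ 0`, let `h : ℤ → ℚ` be supported on
`[0, c]` and symmetric (`h j = h (c − j)`), and let
`q(m) = ∑_{0 ≤ j ≤ c, j ≡ m (mod t)} binom(e + (m − j)/t, e)·h j`.
Then `q(−m) = (−1)^e · q(m − t·h∨)` for all `m ∈ ℤ`. -/
theorem stmt_15 (t : ℤ) (ht : 1 ≤ t) (e : ℕ) (hv : ℤ) (hhv : 1 ≤ hv)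
    (c : ℤ) (hcdef : c = t * ((e : ℤ) + 1 - hv)) (hc : 0 ≤ c)
    (h : ℤ → ℚ)
    (hsupp : ∀ j : ℤ, (j < 0 ∨ c < j) → h j = 0)
    (hsymm : ∀ j : ℤ, 0 ≤ j → j ≤ c → h j = h (c - j))
    (q : ℤ → ℚ)
    (hq : ∀ m : ℤ, q m =
      ∑ j ∈ (Finset.Icc (0 : ℤ) c).filter (fun j => (m - j) % t = 0),
        binomQ ((e : ℤ) + (m - j) / t) e * h j) :
    ∀ m : ℤ, q (-m) = (-1 : ℚ) ^ e * q (m - t * hv) := by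
  intro m
  have ht0 : t ≠ 0 := by omega
  rw [hq (-m), hq (m - t * hv), Finset.mul_sum]
  refine Finset.sum_nbij' (fun j => c - j) (fun j => c - j) ?_ ?_ ?_ ?_ ?_
  · intro j hj
    simp only [Finset.mem_filter, Finset.mem_Icc] at hj ⊢
    obtain ⟨⟨hj0, hjc⟩, hmod⟩ := hj
    obtain ⟨k, hk⟩ := Int.dvd_of_emod_eq_zero hmod
    refine ⟨⟨by omega, by omega⟩, Int.emod_emod_of_dvd _ dvd_rfl ▸ ?_⟩
    have : m - t * hv - (c - j) = t * (-k - e - 1) := by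
      subst hcdef; linear_combination (-1 : ℤ) * hk
    rw [this]
    simp [Int.mul_emod_right]
  · intro j hj
    simp only [Finset.mem_filter, Finset.mem_Icc] at hj ⊢
    obtain ⟨⟨hj0, hjc⟩, hmod⟩ := hj
    obtain ⟨k, hk⟩ := Int.dvd_of_emod_eq_zero hmod
    refine ⟨⟨by omega, by omega⟩, ?_⟩
    have : -m - (c - j) = t * (-k - e - 1) := by
      subst hcdef; linear_combination (-1 : ℤ) * hk
    rw [this]
    simp [Int.mul_emod_right]
  · intro j hj; simp
  · intro j hj; simp
  · intro j hj
    simp only [Finset.mem_filter, Finset.mem_Icc] at hj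
    obtain ⟨⟨hj0, hjc⟩, hmod⟩ := hj
    obtain ⟨k, hk⟩ := Int.dvd_of_emod_eq_zero hmod
    have h1 : (-m - j) / t = k := by rw [hk]; exact Int.mul_ediv_cancel_left _ ht0
    have h2 : (m - t * hv - (c - j)) / t = -k - e - 1 := by
      have heq : m - t * hv - (c - j) = t * (-k - e - 1) := by
        subst hcdef; linear_combination (-1 : ℤ) * hk
      rw [heq]; exact Int.mul_ediv_cancel_left _ ht0
    rw [h1, h2, hsymm j hj0 hjc, binomQ_reflect ((e : ℤ) + k) e,
      show (e : ℤ) - 1 - ((e : ℤ) + k) = (e : ℤ) + (-k - (e : ℤ) - 1) from by ring]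
    ring
end
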